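/- arXiv:1811.12061 — 5 statements merged into one kernel-verified Lean document; each statement's English description precedes it below -/
import Mathlib

section
/- Let π be a (possibly infinite) Borel measure on ℝ^d × ℝ^d whose support is contained in gph ∂ψ for a closed proper convex function ψ on ℝ^d, and let μ and ν denote the left and right marginals of π. If μ is σ-finite and vanishes on every Borel set of Hausdorff dimension at most d−1, then ψ is differentiable μ-almost everywhere, π = (Id × ∇ψ)_#μ, and consequently ∇ψ_#μ = ν. -/
open MeasureTheory Filter Topology Set
open scoped Pointwise ENNReal

noncomputable section

abbrev Ed (d : ℕ) : Type := EuclideanSpace ℝ (Fin d)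

/-- A Borel measure "on `ℝ^d \ {0}`" (encoded as a measure not charging `{0}`)
belonging to `M₀`: finite outside every neighbourhood of the origin. -/
def IsM0 {X : Type*} [NormedAddCommGroup X] [MeasurableSpace X] (μ : Measure X) : Prop :=
  μ {0} = 0 ∧ ∀ r : ℝ, 0 < r → μ {x | r < ‖x‖} < ⊤

/-- Test functions for `M₀`-convergence: bounded continuous, vanishing on a ball
around the origin. -/
def M0TestFun {X : Type*} [NormedAddCommGroup X] (f : X → ℝ) : Prop :=
  Continuous f ∧ (∃ C : ℝ, ∀ x, |f x| ≤ C) ∧ ∃ r : ℝ, 0 < r ∧ ∀ x, ‖x‖ ≤ r → f x = 0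

/-- Convergence in `M₀` along a filter. -/
def M0Tendsto {ι : Type*} {X : Type*} [NormedAddCommGroup X] [MeasurableSpace X]
    (l : Filter ι) (μ : ι → Measure X) (ν : Measure X) : Prop :=
  ∀ f : X → ℝ, M0TestFun f →
    Tendsto (fun i => ∫ x, f x ∂(μ i)) l (nhds (∫ x, f x ∂ν))

/-- Weak convergence of measures along a filter. -/
def WeakTendsto {ι : Type*} {X : Type*} [TopologicalSpace X] [MeasurableSpace X]
    (l : Filter ι) (μ : ι → Measure X) (ν : Measure X) : Prop :=
  ∀ f : X → ℝ, Continuous f → (∃ C : ℝ, ∀ x, |f x| ≤ C) →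
    Tendsto (fun i => ∫ x, f x ∂(μ i)) l (nhds (∫ x, f x ∂ν))

/-- The support of a Borel measure: points all of whose neighbourhoods have
positive measure. -/
def sptM {X : Type*} [TopologicalSpace X] [MeasurableSpace X] (μ : Measure X) : Set X :=
  {x | ∀ U : Set X, IsOpen U → x ∈ U → μ U ≠ 0}

/-- `π ∈ Π(μ, ν)` : coupling measures. -/
def IsCoupling {d : ℕ} (π : Measure (Ed d × Ed d)) (μ ν : Measure (Ed d)) : Prop :=
  (∀ A : Set (Ed d), MeasurableSet A → π (A ×ˢ (univ : Set (Ed d))) = μ A) ∧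
  (∀ A : Set (Ed d), MeasurableSet A → π ((univ : Set (Ed d)) ×ˢ A) = ν A)

/-- A proper convex function `ℝ^d → ℝ ∪ {+∞}` (never `⊥`, somewhere finite,
convex epigraph). -/
def ProperConvex {d : ℕ} (ψ : Ed d → EReal) : Prop :=
  (∀ x, ψ x ≠ ⊥) ∧ (∃ x, ψ x ≠ ⊤) ∧
    Convex ℝ {p : Ed d × ℝ | ψ p.1 ≤ (p.2 : EReal)}

/-- The subdifferential of a convex function. -/
def subdiff {d : ℕ} (ψ : Ed d → EReal) (x : Ed d) : Set (Ed d) :=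
  {y | ∀ z : Ed d, ψ x + ((inner ℝ y (z - x) : ℝ) : EReal) ≤ ψ z}

/-- Graph of a multivalued map. -/
def gph {α β : Type*} (S : α → Set β) : Set (α × β) := {p | p.2 ∈ S p.1}

/-- Image of a set under a multivalued map. -/
def mimage {α β : Type*} (S : α → Set β) (A : Set α) : Set β := ⋃ x ∈ A, S x

/-- A convex function is differentiable at `x` iff its subdifferential there is
a singleton. -/
def DiffAt {d : ℕ} (ψ : Ed d → EReal) (x : Ed d) : Prop := ∃ y, subdiff ψ x = {y}

-- The gradient of a convex function (junk value `0` off the differentiability set).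
open Classical in
noncomputable def grad {d : ℕ} (ψ : Ed d → EReal) (x : Ed d) : Ed d :=
  if h : DiffAt ψ x then h.choose else 0

/-- `ν = ∇ψ_# μ` : the pushforward by the gradient (of the restriction of `μ`
to the set where the gradient is defined). -/
def GradPush {d : ℕ} (ψ : Ed d → EReal) (μ ν : Measure (Ed d)) : Prop :=
  ∀ A : Set (Ed d), MeasurableSet A → ν A = μ {x | DiffAt ψ x ∧ grad ψ x ∈ A}

/-- `π = (Id × ∇ψ)_# μ`. -/
def IdGradPush {d : ℕ} (ψ : Ed d → EReal) (μ : Measure (Ed d))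
    (π : Measure (Ed d × Ed d)) : Prop :=
  ∀ B : Set (Ed d × Ed d), MeasurableSet B → π B = μ {x | DiffAt ψ x ∧ (x, grad ψ x) ∈ B}

/-- `μ` vanishes on Borel sets of Hausdorff dimension at most `d - 1`. -/
def VanishSmall {d : ℕ} (μ : Measure (Ed d)) : Prop :=
  ∀ A : Set (Ed d), MeasurableSet A → dimH A ≤ (d : ℝ≥0∞) - 1 → μ A = 0

/-- Cyclic monotonicity of a subset of `ℝ^d × ℝ^d` (squared-distance cost). -/
def CyclMono {d : ℕ} (Γ : Set (Ed d × Ed d)) : Prop :=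
  ∀ n : ℕ, ∀ p : Fin (n + 1) → Ed d × Ed d, (∀ i, p i ∈ Γ) →
    ∑ i, ‖(p i).1 - (p i).2‖ ^ 2 ≤ ∑ i, ‖(p i).1 - (p (i + 1)).2‖ ^ 2

/-- Topological inner ℝ limit of a sequence of sets. -/
def innerLim {X : Type*} [TopologicalSpace X] (C : ℕ → Set X) : Set X :=
  {x | ∀ U ∈ nhds x, ∀ᶠ n in atTop, (C n ∩ U).Nonempty}

/-- Topological outer limit of a sequence of sets. -/
def outerLim {X : Type*} [TopologicalSpace X] (C : ℕ → Set X) : Set X :=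
  {x | ∀ U ∈ nhds x, ∃ᶠ n in atTop, (C n ∩ U).Nonempty}

/-- Painlevé–Kuratowski convergence of sets. -/
def SetConv {X : Type*} [TopologicalSpace X] (C : ℕ → Set X) (L : Set X) : Prop :=
  innerLim C = L ∧ outerLim C = L

/-- Graphical convergence of multivalued maps. -/
def GraphConv {α β : Type*} [TopologicalSpace α] [TopologicalSpace β]
    (S : ℕ → α → Set β) (T : α → Set β) : Prop :=
  SetConv (fun n => gph (S n)) (gph T)

/-- `A + ε𝔹`. -/
def addBall {X : Type*} [SeminormedAddCommGroup X] (A : Set X) (ε : ℝ) : Set X :=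
  {x | ∃ a ∈ A, ‖x - a‖ ≤ ε}

end

noncomputable section

/-- The rescaled measure `t · π(B(t)·)` with `B(t)(x,y) = (b₁(t)x, b₂(t)y)`. -/
def scaledPairMeas {d : ℕ} (π : Measure (Ed d × Ed d)) (b₁ b₂ : ℝ → ℝ) (t : ℝ) :
    Measure (Ed d × Ed d) :=
  ENNReal.ofReal t • Measure.map (fun p : Ed d × Ed d => ((b₁ t)⁻¹ • p.1, (b₂ t)⁻¹ • p.2)) π

/-- Regular variation of a measure `ν` with auxiliary function `b`, index `α > 0`
and non-zero limit measure `νb ∈ M₀`. -/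
def RegVarying {d : ℕ} (ν : Measure (Ed d)) (b : ℝ → ℝ) (α : ℝ) (νb : Measure (Ed d)) : Prop :=
  0 < α ∧ νb ≠ 0 ∧ IsM0 νb ∧ (∀ᶠ t in atTop, 0 < b t) ∧
  (∀ lam : ℝ, 0 < lam →
      Tendsto (fun t => b (lam * t) / b t) atTop (nhds (lam ^ (1 / α)))) ∧
  M0Tendsto (atTop : Filter ℝ)
    (fun t => ENNReal.ofReal t • Measure.map (fun x => (b t)⁻¹ • x) ν) νb

/-- `ψb` is a closed proper convex function whose subdifferential arises as the
graphical limit of the subdifferential maps `S n` along a subsequence. -/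
def IsGraphSubLimit {d : ℕ} (S : ℕ → Ed d → Set (Ed d)) (ψb : Ed d → EReal) : Prop :=
  ProperConvex ψb ∧ LowerSemicontinuous ψb ∧
    ∃ φ : ℕ → ℕ, StrictMono φ ∧ GraphConv (fun k => S (φ k)) (subdiff ψb)

/-- `ψb` is a closed proper convex function whose subdifferential arises as a graphical
limit of the rescaled subdifferentials `b₂(tₙ)⁻¹ ∂ψ(b₁(tₙ) ·)` along some sequence
`tₙ → ∞`. -/
def IsScaledSubLimit {d : ℕ} (ψ : Ed d → EReal) (b₁ b₂ : ℝ → ℝ) (ψb : Ed d → EReal) : Prop :=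
  ProperConvex ψb ∧ LowerSemicontinuous ψb ∧
    ∃ t : ℕ → ℝ, (∀ n, 0 < t n) ∧ Tendsto t atTop atTop ∧
      GraphConv (fun n x => (b₂ (t n))⁻¹ • subdiff ψ ((b₁ (t n)) • x)) (subdiff ψb)

end
section AuxLemmas

open MeasureTheory Set Function Module

variable {d : ℕ} {ψ : Ed d → EReal}

lemma psi_ne_top_of_subdiff (hψ : ProperConvex ψ) {x y : Ed d} (hy : y ∈ subdiff ψ x) :
    ψ x ≠ ⊤ := by
  intro htop
  obtain ⟨z, hz⟩ := hψ.2.1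
  have h := hy z
  rw [htop, EReal.top_add_coe] at h
  exact hz (top_le_iff.mp h)

lemma subdiff_mono (hψ : ProperConvex ψ) {x x' y y' : Ed d}
    (hy : y ∈ subdiff ψ x) (hy' : y' ∈ subdiff ψ x') :
    0 ≤ (inner ℝ (y - y') (x - x') : ℝ) := by
  have hxe : ((ψ x).toReal : EReal) = ψ x :=
    EReal.coe_toReal (psi_ne_top_of_subdiff hψ hy) (hψ.1 x)
  have hxe' : ((ψ x').toReal : EReal) = ψ x' :=
    EReal.coe_toReal (psi_ne_top_of_subdiff hψ hy') (hψ.1 x')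
  have h1 : (ψ x).toReal + (inner ℝ y (x' - x) : ℝ) ≤ (ψ x').toReal := by
    have h := hy x'
    rw [← hxe, ← hxe', ← EReal.coe_add, EReal.coe_le_coe_iff] at h
    exact h
  have h2 : (ψ x').toReal + (inner ℝ y' (x - x') : ℝ) ≤ (ψ x).toReal := by
    have h := hy' x
    rw [← hxe, ← hxe', ← EReal.coe_add, EReal.coe_le_coe_iff] at h
    exact h
  have e1 : (inner ℝ y (x' - x) : ℝ) = -(inner ℝ y (x - x') : ℝ) := by
    rw [show x' - x = -(x - x') by abel, inner_neg_right]
  have e2 : (inner ℝ (y - y') (x - x') : ℝ) = (inner ℝ y (x - x') : ℝ) - (inner ℝ y' (x - x') : ℝ) :=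
    inner_sub_left _ _ _
  rw [e1] at h1
  linarith

lemma ereal_add_le_iff {w : EReal} (hw : w ≠ ⊥) {r s : ℝ} :
    w + (r : EReal) ≤ (s : EReal) ↔ w ≤ ((s - r : ℝ) : EReal) := by
  by_cases hw2 : w = ⊤
  · subst hw2
    rw [EReal.top_add_coe]
    constructor <;> intro h <;> exact absurd (top_le_iff.mp h) (EReal.coe_ne_top _)
  · rw [← EReal.coe_toReal hw2 hw, ← EReal.coe_add, EReal.coe_le_coe_iff, EReal.coe_le_coe_iff]
    constructor <;> intro h <;> linarith

lemma closed_le_of_lsc {α : Type*} [TopologicalSpace α] {f : α → EReal} {h : α → ℝ}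
    (hf : LowerSemicontinuous f) (hh : Continuous h) :
    IsClosed {p | f p ≤ ((h p : ℝ) : EReal)} := by
  rw [← isOpen_compl_iff, isOpen_iff_mem_nhds]
  intro p hp
  simp only [mem_compl_iff, mem_setOf_eq, not_le] at hp
  obtain ⟨y, h1, h2⟩ := exists_between hp
  have e1 : ∀ᶠ q in nhds p, y < f q := hf p y h2
  have hc : Continuous fun q => ((h q : ℝ) : EReal) := continuous_coe_real_ereal.comp hh
  have e2 : ∀ᶠ q in nhds p, ((h q : ℝ) : EReal) < y :=
    (hc.isOpen_preimage _ isOpen_Iio).mem_nhds h1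
  filter_upwards [e1, e2] with q hq1 hq2
  simp only [mem_compl_iff, mem_setOf_eq, not_le]
  exact hq2.trans hq1

lemma gph_closed (hbot : ∀ x, ψ x ≠ ⊥) (hcl : LowerSemicontinuous ψ) :
    IsClosed (gph (subdiff ψ)) := by
  have heq : gph (subdiff ψ) =
      ⋂ z : Ed d, {p : Ed d × Ed d | ψ p.1 + ((inner ℝ p.2 (z - p.1) : ℝ) : EReal) ≤ ψ z} := by
    ext p
    simp only [gph, subdiff, mem_setOf_eq, mem_iInter]
  rw [heq]
  refine isClosed_iInter fun z => ?_
  by_cases hz : ψ z = ⊤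
  · have : {p : Ed d × Ed d | ψ p.1 + ((inner ℝ p.2 (z - p.1) : ℝ) : EReal) ≤ ψ z} = univ :=
      eq_univ_of_forall fun p => by simp only [mem_setOf_eq, hz]; exact le_top
    rw [this]; exact isClosed_univ
  · obtain ⟨a, ha⟩ : ∃ a : ℝ, ψ z = (a : EReal) :=
      ⟨(ψ z).toReal, (EReal.coe_toReal hz (hbot z)).symm⟩
    have hset : {p : Ed d × Ed d | ψ p.1 + ((inner ℝ p.2 (z - p.1) : ℝ) : EReal) ≤ ψ z} =
        {p : Ed d × Ed d | ψ p.1 ≤ ((a - (inner ℝ p.2 (z - p.1) : ℝ) : ℝ) : EReal)} := by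
      ext p
      simp only [mem_setOf_eq]
      rw [ha, ereal_add_le_iff (hbot p.1)]
    rw [hset]
    exact closed_le_of_lsc (LowerSemicontinuous.comp hcl continuous_fst)
      (continuous_const.sub ((continuous_snd).inner (continuous_const.sub continuous_fst)))

lemma null_compl_sptM {X : Type*} [TopologicalSpace X] [SecondCountableTopology X]
    [MeasurableSpace X] (m : Measure X) : m (sptM m)ᶜ = 0 := by
  set s := {u ∈ TopologicalSpace.countableBasis X | m u = 0} with hs
  have hc : s.Countable := (TopologicalSpace.countable_countableBasis X).mono (sep_subset _ _)
  have hsub : (sptM m)ᶜ ⊆ ⋃₀ s := by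
    intro x hx
    simp only [mem_compl_iff, sptM, mem_setOf_eq, not_forall] at hx
    obtain ⟨U, hU, hxU, hm⟩ := hx
    obtain ⟨v, hvB, hxv, hvU⟩ :=
      (TopologicalSpace.isBasis_countableBasis X).exists_subset_of_mem_open hxU hU
    exact ⟨v, ⟨hvB, measure_mono_null hvU (not_not.mp hm)⟩, hxv⟩
  refine measure_mono_null hsub ?_
  rw [sUnion_eq_biUnion]
  exact (measure_biUnion_null_iff hc).mpr fun u hu => hu.2

lemma measurableSet_image_of_isClosed {X Y : Type*} [TopologicalSpace X] [SigmaCompactSpace X]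
    [TopologicalSpace Y] [T2Space Y] [MeasurableSpace Y] [OpensMeasurableSpace Y]
    {f : X → Y} (hf : Continuous f) {C : Set X} (hC : IsClosed C) :
    MeasurableSet (f '' C) := by
  have h : C = ⋃ n, C ∩ compactCovering X n := by
    rw [← inter_iUnion, iUnion_compactCovering, inter_univ]
  rw [h, image_iUnion]
  exact MeasurableSet.iUnion fun n =>
    (((isCompact_compactCovering X n).inter_left hC).image hf).measurableSet

end AuxLemmas

section CoverLemma

open MeasureTheory Set Function Module

variable {d : ℕ} {ψ : Ed d → EReal}

lemma cover_lemma (hψ : ProperConvex ψ) {e : Ed d} (he : e ≠ 0) (c δ R : ℝ) (hδ : 0 < δ) :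
    ∃ G : Set (Ed d), MeasurableSet G ∧ dimH G ≤ (d : ℝ≥0∞) - 1 ∧
      {x : Ed d | ∃ y₁ y₂ : Ed d, y₁ ∈ subdiff ψ x ∧ y₂ ∈ subdiff ψ x ∧ ‖y₁‖ ≤ R ∧ ‖y₂‖ ≤ R ∧
        (inner ℝ y₁ e : ℝ) ≤ c - δ ∧ c + δ ≤ (inner ℝ y₂ e : ℝ)} ⊆ G := by
  classical
  set A := {x : Ed d | ∃ y₁ y₂ : Ed d, y₁ ∈ subdiff ψ x ∧ y₂ ∈ subdiff ψ x ∧ ‖y₁‖ ≤ R ∧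
      ‖y₂‖ ≤ R ∧ (inner ℝ y₁ e : ℝ) ≤ c - δ ∧ c + δ ≤ (inner ℝ y₂ e : ℝ)} with hA
  rcases eq_empty_or_nonempty A with hAe | ⟨x₀, hx₀⟩
  · exact ⟨∅, MeasurableSet.empty, by simp [dimH_empty], by rw [hAe]⟩
  have hR : 0 ≤ R := by
    obtain ⟨y₁, _, _, _, hn1, _, _, _⟩ := hx₀
    exact (norm_nonneg _).trans hn1
  have hd : 1 ≤ d := by
    by_contra hcon
    have hd0 : d = 0 := by omega
    have : (0:ℕ) < finrank ℝ (Ed d) := by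
      have : Nontrivial (Ed d) := ⟨e, 0, he⟩
      exact Module.finrank_pos_iff.mpr this
    rw [finrank_euclideanSpace_fin, hd0] at this
    omega
  have hepos : (0:ℝ) < ‖e‖ := norm_pos_iff.mpr he
  set u : Ed d := ‖e‖⁻¹ • e with hu
  have hnu : ‖u‖ = 1 := by
    rw [hu, norm_smul, norm_inv, norm_norm, inv_mul_cancel₀ hepos.ne']
  have hune : u ≠ 0 := by
    intro h; rw [h] at hnu; simp at hnu
  set L : ℝ := R * ‖e‖ / δ with hL
  have hLnn : 0 ≤ L := by positivity
  set P : Ed d → Ed d := fun x => x - (inner ℝ x u : ℝ) • u with hP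
  -- the key two-point estimate
  have key : ∀ x ∈ A, ∀ x' ∈ A, (inner ℝ x u : ℝ) - (inner ℝ x' u : ℝ) ≤ L * ‖P x - P x'‖ := by
    intro x hx x' hx'
    obtain ⟨y₁, y₂, hy₁, hy₂, hn₁, hn₂, hlo, hhi⟩ := hx
    obtain ⟨y₁', y₂', hy₁', hy₂', hn₁', hn₂', hlo', hhi'⟩ := hx'
    set t : ℝ := (inner ℝ x u : ℝ)
    set t' : ℝ := (inner ℝ x' u : ℝ)
    rcases le_or_gt (t - t') 0 with hle | hlt
    · exact hle.trans (by positivity)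
    have hmono := subdiff_mono hψ hy₁ hy₂'
    have hdecomp : x - x' = (t - t') • u + (P x - P x') := by
      simp only [hP, sub_smul]
      abel
    have hyu : (inner ℝ (y₁ - y₂') u : ℝ) ≤ -(2 * δ) / ‖e‖ := by
      have h1 : (inner ℝ (y₁ - y₂') e : ℝ) ≤ -(2 * δ) := by
        rw [inner_sub_left]; linarith
      rw [hu, real_inner_smul_right]
      rw [div_eq_inv_mul]
      exact mul_le_mul_of_nonneg_left h1 (by positivity)
    have hw : (inner ℝ (y₁ - y₂') (P x - P x') : ℝ) ≤ 2 * R * ‖P x - P x'‖ := by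
      calc (inner ℝ (y₁ - y₂') (P x - P x') : ℝ) ≤ ‖y₁ - y₂'‖ * ‖P x - P x'‖ :=
            real_inner_le_norm _ _
        _ ≤ (2 * R) * ‖P x - P x'‖ := by
            apply mul_le_mul_of_nonneg_right _ (norm_nonneg _)
            calc ‖y₁ - y₂'‖ ≤ ‖y₁‖ + ‖y₂'‖ := norm_sub_le _ _
              _ ≤ 2 * R := by linarith
    have hexp : (0:ℝ) ≤ (t - t') * (inner ℝ (y₁ - y₂') u : ℝ) +
        (inner ℝ (y₁ - y₂') (P x - P x') : ℝ) := by
      have h := hmono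
      rw [hdecomp, inner_add_right, real_inner_smul_right] at h
      linarith
    have h2 : (t - t') * ((2 * δ) / ‖e‖) ≤ 2 * R * ‖P x - P x'‖ := by
      have h3 := mul_le_mul_of_nonneg_left hyu hlt.le
      have h4 : (t - t') * (-(2 * δ) / ‖e‖) = -((t - t') * ((2 * δ) / ‖e‖)) := by ring
      rw [h4] at h3
      linarith
    have hpos : (0:ℝ) < (2 * δ) / ‖e‖ := by positivity
    calc t - t' = ((t - t') * ((2 * δ) / ‖e‖)) * (‖e‖ / (2 * δ)) := by
          field_simp
      _ ≤ (2 * R * ‖P x - P x'‖) * (‖e‖ / (2 * δ)) :=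
          mul_le_mul_of_nonneg_right h2 (by positivity)
      _ = L * ‖P x - P x'‖ := by rw [hL]; field_simp
  have keyabs : ∀ x ∈ A, ∀ x' ∈ A,
      |(inner ℝ x u : ℝ) - (inner ℝ x' u : ℝ)| ≤ L * ‖P x - P x'‖ := by
    intro x hx x' hx'
    rw [abs_sub_le_iff]
    refine ⟨key x hx x' hx', ?_⟩
    rw [show ‖P x - P x'‖ = ‖P x' - P x‖ from norm_sub_rev _ _]
    exact key x' hx' x hx
  set S := P '' A with hS
  set τ : Ed d → ℝ := fun w => (inner ℝ (Function.invFunOn P A w) u : ℝ) with hτ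
  have hτlip : LipschitzOnWith L.toNNReal τ S := by
    apply LipschitzOnWith.of_dist_le_mul
    intro w hw w' hw'
    obtain ⟨x, hxA, hxw⟩ := hw
    obtain ⟨x', hx'A, hx'w⟩ := hw'
    have h1 : Function.invFunOn P A w ∈ A := Function.invFunOn_mem ⟨x, hxA, hxw⟩
    have h2 : P (Function.invFunOn P A w) = w := Function.invFunOn_eq ⟨x, hxA, hxw⟩
    have h1' : Function.invFunOn P A w' ∈ A := Function.invFunOn_mem ⟨x', hx'A, hx'w⟩
    have h2' : P (Function.invFunOn P A w') = w' := Function.invFunOn_eq ⟨x', hx'A, hx'w⟩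
    have h := keyabs _ h1 _ h1'
    rw [h2, h2'] at h
    simpa [hτ, Real.dist_eq, dist_eq_norm, Real.coe_toNNReal L hLnn] using h
  obtain ⟨g0, hg0lip, hg0eq⟩ := hτlip.extend_real
  set g : Ed d → Ed d := fun w => w + g0 w • u with hg
  have hglip : LipschitzWith (1 + L.toNNReal) g := by
    apply LipschitzWith.of_dist_le_mul
    intro w w'
    have hdist := hg0lip.dist_le_mul w w'
    calc dist (g w) (g w') = ‖(w - w') + (g0 w - g0 w') • u‖ := by
          rw [dist_eq_norm, hg]; congr 1; simp only [sub_smul]; abel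
      _ ≤ ‖w - w'‖ + ‖(g0 w - g0 w') • u‖ := norm_add_le _ _
      _ = ‖w - w'‖ + |g0 w - g0 w'| := by
          rw [norm_smul, hnu, mul_one, Real.norm_eq_abs]
      _ ≤ ‖w - w'‖ + L.toNNReal * ‖w - w'‖ := by
          have : |g0 w - g0 w'| = dist (g0 w) (g0 w') := (Real.dist_eq _ _).symm
          rw [this, ← dist_eq_norm]
          linarith [hdist]
      _ = ↑(1 + L.toNNReal) * dist w w' := by
          rw [dist_eq_norm]; push_cast; ring
  set W : Set (Ed d) := {x | (inner ℝ x u : ℝ) = 0} with hW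
  have hWclosed : IsClosed W :=
    isClosed_eq (Continuous.inner continuous_id continuous_const) continuous_const
  have hsub : A ⊆ g '' W := by
    intro x hx
    have hPW : P x ∈ W := by
      simp only [hW, hP, mem_setOf_eq, inner_sub_left, real_inner_smul_left,
        real_inner_self_eq_norm_sq, hnu]
      ring
    refine ⟨P x, hPW, ?_⟩
    have h1 : Function.invFunOn P A (P x) ∈ A := Function.invFunOn_mem ⟨x, hx, rfl⟩
    have h2 : P (Function.invFunOn P A (P x)) = P x := Function.invFunOn_eq ⟨x, hx, rfl⟩
    have ht : (inner ℝ (Function.invFunOn P A (P x)) u : ℝ) = (inner ℝ x u : ℝ) := by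
      have h := keyabs _ h1 _ hx
      rw [h2] at h
      simp only [sub_self, norm_zero, mul_zero] at h
      have := abs_nonneg ((inner ℝ (Function.invFunOn P A (P x)) u : ℝ) - (inner ℝ x u : ℝ))
      have habs : |(inner ℝ (Function.invFunOn P A (P x)) u : ℝ) - (inner ℝ x u : ℝ)| = 0 :=
        le_antisymm h this
      have := abs_eq_zero.mp habs
      linarith
    have hg0 : g0 (P x) = (inner ℝ x u : ℝ) := by
      rw [← hg0eq ⟨x, hx, rfl⟩]
      exact ht
    show P x + g0 (P x) • u = x
    rw [hg0]
    simp only [hP]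
    abel
  refine ⟨g '' W, measurableSet_image_of_isClosed hglip.continuous hWclosed, ?_, hsub⟩
  calc dimH (g '' W) ≤ dimH W := hglip.dimH_image_le W
    _ ≤ (d : ℝ≥0∞) - 1 := ?_
  set Wsub := (ℝ ∙ u)ᗮ with hWsub
  have hWeq : W = Subtype.val '' (univ : Set Wsub) := by
    rw [image_univ, Subtype.range_coe]
    ext x
    simp only [hW, mem_setOf_eq, hWsub, SetLike.mem_coe,
      Submodule.mem_orthogonal_singleton_iff_inner_right]
    rw [real_inner_comm]
  rw [hWeq]
  have hlip1 : LipschitzWith 1 (Subtype.val : Wsub → Ed d) :=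
    LipschitzWith.subtype_val _
  refine (hlip1.dimH_image_le _).trans ?_
  rw [Real.dimH_univ_eq_finrank]
  have h1 : finrank ℝ (ℝ ∙ u) = 1 := finrank_span_singleton hune
  have h2 : finrank ℝ (ℝ ∙ u) + finrank ℝ Wsub = finrank ℝ (Ed d) :=
    Submodule.finrank_add_finrank_orthogonal _
  rw [h1, finrank_euclideanSpace_fin] at h2
  have h3 : finrank ℝ Wsub = d - 1 := by omega
  rw [h3, ENNReal.natCast_sub, Nat.cast_one]

end CoverLemma

section GradMeasurable

open MeasureTheory Set Function Module

variable {d : ℕ} {ψ : Ed d → EReal}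

def badSet (ψ : Ed d → EReal) : Set (Ed d) :=
  {x | ∃ y₁ y₂ : Ed d, y₁ ∈ subdiff ψ x ∧ y₂ ∈ subdiff ψ x ∧ y₁ ≠ y₂}

lemma subdiff_eq_singleton {x : Ed d} (h : DiffAt ψ x) : subdiff ψ x = {grad ψ x} := by
  unfold grad
  rw [dif_pos h]
  exact h.choose_spec

lemma grad_mem {x : Ed d} (h : DiffAt ψ x) : grad ψ x ∈ subdiff ψ x := by
  rw [subdiff_eq_singleton h]; exact rfl

lemma grad_of_not_diffAt {x : Ed d} (h : ¬ DiffAt ψ x) : grad ψ x = 0 := by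
  unfold grad
  rw [dif_neg h]

lemma diffSet_eq : {x | DiffAt ψ x} = (Prod.fst '' gph (subdiff ψ)) \ badSet ψ := by
  ext x
  constructor
  · rintro ⟨y, hy⟩
    refine ⟨⟨(x, y), ?_, rfl⟩, ?_⟩
    · show y ∈ subdiff ψ x
      rw [hy]; exact rfl
    · rintro ⟨y₁, y₂, h1, h2, hne⟩
      rw [hy] at h1 h2
      exact hne (h1.trans h2.symm)
  · rintro ⟨⟨p, hp, hpx⟩, hnb⟩
    refine ⟨p.2, ?_⟩
    have hp2 : p.2 ∈ subdiff ψ x := hpx ▸ hp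
    ext y'
    simp only [mem_singleton_iff]
    constructor
    · intro hy'
      by_contra hne
      exact hnb ⟨y', p.2, hy', hp2, hne⟩
    · rintro rfl; exact hp2

lemma measurableSet_badSet (hbot : ∀ x, ψ x ≠ ⊥) (hcl : LowerSemicontinuous ψ) :
    MeasurableSet (badSet ψ) := by
  have hgc := gph_closed hbot hcl
  have h : badSet ψ = ⋃ k : ℕ, (fun q : (Ed d × Ed d) × Ed d × Ed d => q.1.1) ''
      {q : (Ed d × Ed d) × Ed d × Ed d | q.1 ∈ gph (subdiff ψ) ∧ q.2 ∈ gph (subdiff ψ) ∧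
        q.1.1 = q.2.1 ∧ 1 / ((k:ℝ) + 1) ≤ ‖q.1.2 - q.2.2‖} := by
    ext x
    simp only [badSet, mem_setOf_eq, mem_iUnion, mem_image]
    constructor
    · rintro ⟨y₁, y₂, h1, h2, hne⟩
      have hpos : 0 < ‖y₁ - y₂‖ := by
        rw [norm_pos_iff, sub_ne_zero]; exact hne
      obtain ⟨k, hk⟩ := exists_nat_one_div_lt hpos
      refine ⟨k, ((x, y₁), (x, y₂)), ⟨h1, h2, rfl, ?_⟩, rfl⟩
      exact_mod_cast hk.le
    · rintro ⟨k, ⟨⟨x₁, y₁⟩, ⟨x₂, y₂⟩⟩, ⟨hq1, hq2, hqx, hqn⟩, rfl⟩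
      simp only at hqx hqn
      refine ⟨y₁, y₂, hq1, by rw [show x₁ = x₂ from hqx]; exact hq2, ?_⟩
      intro hcontra
      rw [hcontra, sub_self, norm_zero] at hqn
      have : (0:ℝ) < 1 / ((k:ℝ) + 1) := by positivity
      linarith
  rw [h]
  refine MeasurableSet.iUnion fun k => measurableSet_image_of_isClosed
    (continuous_fst.comp continuous_fst) ?_
  refine ((hgc.preimage continuous_fst).inter ((hgc.preimage continuous_snd).inter
    ((isClosed_eq (continuous_fst.comp continuous_fst)
      (continuous_fst.comp continuous_snd)).inter ?_)))
  exact isClosed_le continuous_const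
    ((continuous_snd.comp continuous_fst).sub (continuous_snd.comp continuous_snd)).norm

lemma measurableSet_diffSet (hbot : ∀ x, ψ x ≠ ⊥) (hcl : LowerSemicontinuous ψ) :
    MeasurableSet {x | DiffAt ψ x} := by
  rw [diffSet_eq]
  exact (measurableSet_image_of_isClosed continuous_fst (gph_closed hbot hcl)).diff
    (measurableSet_badSet hbot hcl)

lemma measurable_grad (hbot : ∀ x, ψ x ≠ ⊥) (hcl : LowerSemicontinuous ψ) :
    Measurable (grad ψ) := by
  have hgc := gph_closed hbot hcl
  have hD := measurableSet_diffSet hbot hcl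
  refine measurable_of_isClosed fun A hA => ?_
  have hmeas : MeasurableSet ({x | DiffAt ψ x} ∩
      Prod.fst '' (gph (subdiff ψ) ∩ (univ : Set (Ed d)) ×ˢ A)) :=
    hD.inter (measurableSet_image_of_isClosed continuous_fst
      (hgc.inter (isClosed_univ.prod hA)))
  have hiff : ∀ x, DiffAt ψ x → (grad ψ x ∈ A ↔
      x ∈ Prod.fst '' (gph (subdiff ψ) ∩ (univ : Set (Ed d)) ×ˢ A)) := by
    intro x hx
    constructor
    · intro hmem
      exact ⟨(x, grad ψ x), ⟨grad_mem hx, ⟨trivial, hmem⟩⟩, rfl⟩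
    · rintro ⟨⟨x₁, y⟩, ⟨hyg, -, hyA⟩, rfl⟩
      have : y ∈ subdiff ψ x₁ := hyg
      rw [subdiff_eq_singleton hx, mem_singleton_iff] at this
      rw [← this]
      exact hyA
  by_cases h0 : (0 : Ed d) ∈ A
  · have : grad ψ ⁻¹' A = ({x | DiffAt ψ x} ∩
        Prod.fst '' (gph (subdiff ψ) ∩ (univ : Set (Ed d)) ×ˢ A)) ∪ {x | DiffAt ψ x}ᶜ := by
      ext x
      by_cases hx : DiffAt ψ x
      · simp only [mem_preimage, mem_union, mem_inter_iff, mem_setOf_eq, mem_compl_iff, hx,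
          not_true, or_false, true_and]
        exact hiff x hx
      · simp only [mem_preimage, grad_of_not_diffAt hx, h0, mem_union, mem_compl_iff,
          mem_setOf_eq, hx, not_false_iff, or_true, true_iff]
    rw [this]
    exact hmeas.union hD.compl
  · have : grad ψ ⁻¹' A = {x | DiffAt ψ x} ∩
        Prod.fst '' (gph (subdiff ψ) ∩ (univ : Set (Ed d)) ×ˢ A) := by
      ext x
      by_cases hx : DiffAt ψ x
      · simp only [mem_preimage, mem_inter_iff, mem_setOf_eq, hx, true_and]
        exact hiff x hx
      · simp only [mem_preimage, grad_of_not_diffAt hx, h0, mem_inter_iff, mem_setOf_eq, hx,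
          false_and, iff_false]
    rw [this]
    exact hmeas

end GradMeasurable

/-- Representation, Proposition 3.2: if the support of a (possibly
infinite) Borel measure `π` on `ℝ^d × ℝ^d` is contained in the graph of the
subdifferential of a closed proper convex function `ψ`, and the left marginal `μ` of `π`
is σ-finite and vanishes on Borel sets of Hausdorff dimension at most `d-1`, then `ψ` is
differentiable `μ`-a.e., `π = (Id × ∇ψ)_# μ`, and `∇ψ_# μ = ν`, the right marginal. -/
theorem tails_of_ot_representation
    (d : ℕ) (π : Measure (Ed d × Ed d))
    (ψ : Ed d → EReal) (hψ : ProperConvex ψ) (hcl : LowerSemicontinuous ψ)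
    (hsupp : sptM π ⊆ gph (subdiff ψ))
    (μ ν : Measure (Ed d))
    (hμ : μ = π.map Prod.fst) (hν : ν = π.map Prod.snd)
    (hσ : SigmaFinite μ)
    (hvan : VanishSmall μ) :
    (∀ᵐ x ∂μ, DiffAt ψ x) ∧ IdGradPush ψ μ π ∧ GradPush ψ μ ν := by
  classical
  have hbot := hψ.1
  have hgc : IsClosed (gph (subdiff ψ)) := gph_closed hbot hcl
  have hπGr : π (gph (subdiff ψ))ᶜ = 0 :=
    measure_mono_null (compl_subset_compl.mpr hsupp) (null_compl_sptM π)
  -- countable cover of the bad set by small sets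
  obtain ⟨G, hGmeas, hGsub⟩ : ∃ G : (ℕ × ℚ × ℕ × ℕ) → Set (Ed d),
      (∀ i, MeasurableSet (G i) ∧ dimH (G i) ≤ (d : ℝ≥0∞) - 1) ∧ badSet ψ ⊆ ⋃ i, G i := by
    have hQ : DenseRange (TopologicalSpace.denseSeq (Ed d)) :=
      TopologicalSpace.denseRange_denseSeq _
    set Q := TopologicalSpace.denseSeq (Ed d) with hQdef
    refine ⟨fun i => if h : Q i.1 ≠ 0 then
        (cover_lemma hψ h (i.2.1 : ℝ) (1 / ((i.2.2.1 : ℝ) + 1)) (i.2.2.2 : ℝ)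
          (by positivity)).choose
      else ∅, fun i => ?_, ?_⟩
    · by_cases h : Q i.1 ≠ 0
      · simp only [dif_pos h]
        obtain ⟨h1, h2, -⟩ := (cover_lemma hψ h (i.2.1 : ℝ) (1 / ((i.2.2.1 : ℝ) + 1))
          (i.2.2.2 : ℝ) (by positivity)).choose_spec
        exact ⟨h1, h2⟩
      · simp only [dif_neg h]
        exact ⟨MeasurableSet.empty, by simp [dimH_empty]⟩
    · intro x hx
      obtain ⟨y₁, y₂, hy₁, hy₂, hne⟩ := hx
      set v := y₂ - y₁ with hv
      have hvne : v ≠ 0 := sub_ne_zero.mpr (Ne.symm hne)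
      have hvpos : 0 < ‖v‖ := norm_pos_iff.mpr hvne
      obtain ⟨n, hn⟩ := hQ.exists_dist_lt v (half_pos hvpos)
      set e := Q n with he
      have hev : ‖e - v‖ < ‖v‖ / 2 := by
        rw [dist_comm, dist_eq_norm] at hn
        exact hn
      have hve : ‖v‖ ^ 2 / 2 ≤ (inner ℝ v e : ℝ) := by
        have h1 : (inner ℝ v e : ℝ) = ‖v‖ ^ 2 + (inner ℝ v (e - v) : ℝ) := by
          rw [inner_sub_right, real_inner_self_eq_norm_sq]
          ring
        have h2 : |(inner ℝ v (e - v) : ℝ)| ≤ ‖v‖ * ‖e - v‖ := abs_real_inner_le_norm _ _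
        have h3 : ‖v‖ * ‖e - v‖ ≤ ‖v‖ * (‖v‖ / 2) :=
          mul_le_mul_of_nonneg_left hev.le (norm_nonneg _)
        have h4 := abs_le.mp h2
        nlinarith
      have hepos : e ≠ 0 := by
        intro h
        rw [h, inner_zero_right] at hve
        nlinarith
      have hab : ‖v‖ ^ 2 / 2 ≤ (inner ℝ y₂ e : ℝ) - (inner ℝ y₁ e : ℝ) := by
        have heq : (inner ℝ v e : ℝ) = (inner ℝ y₂ e : ℝ) - (inner ℝ y₁ e : ℝ) :=
          inner_sub_left _ _ _
        rw [← heq]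
        exact hve
      have hba : (0:ℝ) < (inner ℝ y₂ e : ℝ) - (inner ℝ y₁ e : ℝ) :=
        lt_of_lt_of_le (by positivity) hab
      obtain ⟨k, hk⟩ := exists_nat_one_div_lt
        (show (0:ℝ) < ((inner ℝ y₂ e : ℝ) - (inner ℝ y₁ e : ℝ)) / 4 by linarith)
      have hδpos : (0:ℝ) < 1 / ((k : ℝ) + 1) := by positivity
      obtain ⟨q, hq1, hq2⟩ := exists_rat_btwn
        (show (inner ℝ y₁ e : ℝ) + 1 / ((k : ℝ) + 1) <
            (inner ℝ y₂ e : ℝ) - 1 / ((k : ℝ) + 1) by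
          push_cast at hk ⊢
          linarith)
      obtain ⟨m, hm⟩ := exists_nat_ge (max ‖y₁‖ ‖y₂‖)
      refine mem_iUnion.mpr ⟨(n, q, k, m), ?_⟩
      simp only [dif_pos (show Q (n, q, k, m).1 ≠ 0 from hepos)]
      apply (cover_lemma hψ (show Q (n, q, k, m).1 ≠ 0 from hepos)
        ((q : ℚ) : ℝ) (1 / (((k : ℕ) : ℝ) + 1)) ((m : ℕ) : ℝ) (by positivity)).choose_spec.2.2
      refine ⟨y₁, y₂, hy₁, hy₂, ?_, ?_, ?_, ?_⟩
      · exact le_trans (le_max_left _ _) hm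
      · exact le_trans (le_max_right _ _) hm
      · linarith
      · linarith
  have hμG : μ (⋃ i, G i) = 0 :=
    measure_iUnion_null fun i => hvan _ (hGmeas i).1 (hGmeas i).2
  have hDmeas : MeasurableSet {x | DiffAt ψ x} := measurableSet_diffSet hbot hcl
  have hfstmeas : MeasurableSet (Prod.fst '' gph (subdiff ψ)) :=
    measurableSet_image_of_isClosed continuous_fst hgc
  have hμDc : μ {x | DiffAt ψ x}ᶜ = 0 := by
    have hsubc : {x | DiffAt ψ x}ᶜ ⊆ (Prod.fst '' gph (subdiff ψ))ᶜ ∪ ⋃ i, G i := by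
      intro x hx
      by_cases hb : x ∈ badSet ψ
      · exact Or.inr (hGsub hb)
      · left
        intro hmem
        apply hx
        rw [diffSet_eq]
        exact ⟨hmem, hb⟩
    refine measure_mono_null hsubc (measure_union_null ?_ hμG)
    rw [hμ, Measure.map_apply measurable_fst hfstmeas.compl]
    refine measure_mono_null ?_ hπGr
    intro p hp
    simp only [mem_preimage, mem_compl_iff, mem_image] at hp
    simp only [mem_compl_iff]
    intro hpGr
    exact hp ⟨p, hpGr, rfl⟩
  have part1 : ∀ᵐ x ∂μ, DiffAt ψ x := by
    rw [MeasureTheory.ae_iff]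
    exact hμDc
  have hgradm : Measurable (grad ψ) := measurable_grad hbot hcl
  have part2 : IdGradPush ψ μ π := by
    intro B hB
    have hSmeas : MeasurableSet {x | DiffAt ψ x ∧ (x, grad ψ x) ∈ B} := by
      have hEq : {x | DiffAt ψ x ∧ (x, grad ψ x) ∈ B} =
          {x | DiffAt ψ x} ∩ (fun x => (x, grad ψ x)) ⁻¹' B := rfl
      rw [hEq]
      exact hDmeas.inter ((measurable_id.prodMk hgradm) hB)
    have hπD : π (Prod.fst ⁻¹' {x | DiffAt ψ x}ᶜ) = 0 := by
      rw [← Measure.map_apply measurable_fst hDmeas.compl, ← hμ]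
      exact hμDc
    have hπN : π ((gph (subdiff ψ))ᶜ ∪ Prod.fst ⁻¹' {x | DiffAt ψ x}ᶜ) = 0 :=
      measure_union_null hπGr hπD
    have hkey : B \ ((gph (subdiff ψ))ᶜ ∪ Prod.fst ⁻¹' {x | DiffAt ψ x}ᶜ) =
        (Prod.fst ⁻¹' {x | DiffAt ψ x ∧ (x, grad ψ x) ∈ B}) \
          ((gph (subdiff ψ))ᶜ ∪ Prod.fst ⁻¹' {x | DiffAt ψ x}ᶜ) := by
      ext p
      simp only [mem_diff, mem_union, mem_compl_iff, mem_preimage, mem_setOf_eq, not_or,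
        not_not]
      constructor
      · rintro ⟨hpB, hpG, hpD⟩
        have hmem : p.2 ∈ subdiff ψ p.1 := hpG
        rw [subdiff_eq_singleton hpD, mem_singleton_iff] at hmem
        have hpe : (p.1, grad ψ p.1) = p := by rw [← hmem]
        refine ⟨⟨hpD, ?_⟩, hpG, hpD⟩
        rw [hpe]
        exact hpB
      · rintro ⟨⟨hpD, hpB⟩, hpG, hpD'⟩
        have hmem : p.2 ∈ subdiff ψ p.1 := hpG
        rw [subdiff_eq_singleton hpD, mem_singleton_iff] at hmem
        have hpe : (p.1, grad ψ p.1) = p := by rw [← hmem]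
        refine ⟨?_, hpG, hpD⟩
        rw [← hpe]
        exact hpB
    calc π B = π (B \ ((gph (subdiff ψ))ᶜ ∪ Prod.fst ⁻¹' {x | DiffAt ψ x}ᶜ)) :=
          (measure_diff_null hπN).symm
      _ = π ((Prod.fst ⁻¹' {x | DiffAt ψ x ∧ (x, grad ψ x) ∈ B}) \
            ((gph (subdiff ψ))ᶜ ∪ Prod.fst ⁻¹' {x | DiffAt ψ x}ᶜ)) := by rw [hkey]
      _ = π (Prod.fst ⁻¹' {x | DiffAt ψ x ∧ (x, grad ψ x) ∈ B}) := measure_diff_null hπN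
      _ = μ {x | DiffAt ψ x ∧ (x, grad ψ x) ∈ B} := by
          rw [hμ, Measure.map_apply measurable_fst hSmeas]
  have part3 : GradPush ψ μ ν := by
    intro A hA
    have hB : MeasurableSet ((univ : Set (Ed d)) ×ˢ A) := MeasurableSet.univ.prod hA
    have h2 := part2 _ hB
    have hset : {x | DiffAt ψ x ∧ (x, grad ψ x) ∈ (univ : Set (Ed d)) ×ˢ A} =
        {x | DiffAt ψ x ∧ grad ψ x ∈ A} := by
      ext x
      simp [Set.mem_prod]
    have hsnd : Prod.snd ⁻¹' A = (univ : Set (Ed d)) ×ˢ A := by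
      ext p
      simp [Set.mem_prod]
    rw [hν, Measure.map_apply measurable_snd hA, hsnd, h2, hset]
  exact ⟨part1, part2, part3⟩
end

section
/- Let ψ and φ be proper convex functions on ℝ^d. For every t ∈ ℝ, the set of points x at which both ψ and φ are differentiable, ψ(x) − φ(x) = t, and ∇ψ(x) ≠ ∇φ(x), has Hausdorff dimension at most d−1. -/
open MeasureTheory Filter Topology Set
open scoped Pointwise ENNReal

section AuxProof

variable {d : ℕ}

private lemma ereal_exists_coe {v : EReal} (h1 : v ≠ ⊥) (h2 : v ≠ ⊤) : ∃ b : ℝ, v = (b : EReal) := by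
  induction v using EReal.rec with
  | bot => exact absurd rfl h1
  | coe b => exact ⟨b, rfl⟩
  | top => exact absurd rfl h2

private lemma grad_mem_subdiff {ψ : Ed d → EReal} {x : Ed d} (h : DiffAt ψ x) :
    grad ψ x ∈ subdiff ψ x := by
  rw [h.choose_spec]
  simp only [grad, dif_pos h, Set.mem_singleton_iff]

private lemma finite_vals {ψ φ : Ed d → EReal} (hψ : ∀ x, ψ x ≠ ⊥) (hφ : ∀ x, φ x ≠ ⊥)
    {x : Ed d} {t : ℝ} (h : ψ x - φ x = (t : EReal)) :
    ∃ a b : ℝ, ψ x = (a : EReal) ∧ φ x = (b : EReal) ∧ a - b = t := by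
  have hφt : φ x ≠ ⊤ := by
    intro hT
    rw [hT] at h
    simp [sub_eq_add_neg] at h
  obtain ⟨b, hb⟩ := ereal_exists_coe (hφ x) hφt
  have hψt : ψ x ≠ ⊤ := by
    intro hT
    rw [hT, hb] at h
    simp [sub_eq_add_neg] at h
  obtain ⟨a, ha⟩ := ereal_exists_coe (hψ x) hψt
  refine ⟨a, b, ha, hb, ?_⟩
  rw [ha, hb, ← EReal.coe_sub] at h
  exact_mod_cast h

private lemma key_ineq {ψ φ : Ed d → EReal} {t : ℝ} {x y : Ed d}
    (hx : DiffAt ψ x) (hy : DiffAt φ y)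
    {ax bx ay by' : ℝ}
    (hψx : ψ x = (ax : EReal)) (hφx : φ x = (bx : EReal))
    (hψy : ψ y = (ay : EReal)) (hφy : φ y = (by' : EReal))
    (htx : ax - bx = t) (hty : ay - by' = t) :
    (inner ℝ (grad ψ x - grad φ y) (y - x) : ℝ) ≤ 0 := by
  have h1 : ∀ z : Ed d, ψ x + ((inner ℝ (grad ψ x) (z - x) : ℝ) : EReal) ≤ ψ z :=
    grad_mem_subdiff hx
  have h2 : ∀ z : Ed d, φ y + ((inner ℝ (grad φ y) (z - y) : ℝ) : EReal) ≤ φ z :=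
    grad_mem_subdiff hy
  have e1 : ax + (inner ℝ (grad ψ x) (y - x) : ℝ) ≤ ay := by
    have := h1 y
    rw [hψx, hψy, ← EReal.coe_add] at this
    exact_mod_cast this
  have e2 : by' + (inner ℝ (grad φ y) (x - y) : ℝ) ≤ bx := by
    have := h2 x
    rw [hφy, hφx, ← EReal.coe_add] at this
    exact_mod_cast this
  have e3 : (inner ℝ (grad ψ x - grad φ y) (y - x) : ℝ)
      = (inner ℝ (grad ψ x) (y - x) : ℝ) + (inner ℝ (grad φ y) (x - y) : ℝ) := by
    rw [inner_sub_left]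
    have hxy : (x : Ed d) - y = -(y - x) := by abel
    rw [hxy, inner_neg_right]
    ring
  rw [e3]
  linarith

private lemma dimH_hyperplane_le {e : Ed d} (he : ‖e‖ = 1) :
    dimH {z : Ed d | (inner ℝ e z : ℝ) = 0} ≤ (d : ℝ≥0∞) - 1 := by
  have hed : e ≠ 0 := by
    intro h0
    rw [h0, norm_zero] at he
    norm_num at he
  have hnt : Nontrivial (Ed d) := ⟨e, 0, hed⟩
  have hd : 1 ≤ d := by
    have h := Module.finrank_pos (R := ℝ) (M := Ed d)
    rwa [finrank_euclideanSpace_fin] at h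
  set f : Ed d →ₗ[ℝ] ℝ := (innerSL ℝ e).toLinearMap with hf
  have hsurj : Function.Surjective f := by
    intro r
    refine ⟨r • e, ?_⟩
    have h0 : f (r • e) = (inner ℝ e (r • e) : ℝ) := rfl
    rw [h0, real_inner_smul_right, real_inner_self_eq_norm_sq, he]
    norm_num
  have hker : Module.finrank ℝ (LinearMap.ker f) = d - 1 := by
    have h1 := LinearMap.finrank_range_add_finrank_ker f
    rw [LinearMap.range_eq_top.mpr hsurj, finrank_top, finrank_euclideanSpace_fin,
      Module.finrank_self] at h1
    omega
  have hset : {z : Ed d | (inner ℝ e z : ℝ) = 0} = (LinearMap.ker f : Set (Ed d)) := by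
    ext z
    simp [hf, LinearMap.mem_ker]
  have hdim : dimH ((LinearMap.ker f : Set (Ed d))) = ((d - 1 : ℕ) : ℝ≥0∞) := by
    have hiso : Isometry ((↑) : LinearMap.ker f → Ed d) := (LinearMap.ker f).subtypeₗᵢ.isometry
    have h2 := hiso.dimH_image (Set.univ)
    rw [Set.image_univ, Subtype.range_coe_subtype] at h2
    have h3 : {x : Ed d | x ∈ LinearMap.ker f} = (LinearMap.ker f : Set (Ed d)) := rfl
    rw [h3] at h2
    rw [h2, Real.dimH_univ_eq_finrank ↥(LinearMap.ker f), hker]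
  rw [hset, hdim, ENNReal.natCast_sub, Nat.cast_one]

end AuxProof

/-- Lemma 3.5: for proper convex functions `ψ, φ` on `ℝ^d` and `t ∈ ℝ`,
the set of points where both are differentiable, `ψ - φ = t`, and the gradients differ,
has Hausdorff dimension at most `d - 1`. -/
theorem tails_of_ot_smallset
    (d : ℕ) (ψ φ : Ed d → EReal) (hψ : ProperConvex ψ) (hφ : ProperConvex φ) (t : ℝ) :
    dimH {x : Ed d | DiffAt ψ x ∧ DiffAt φ x ∧ ψ x - φ x = (t : EReal) ∧
        grad ψ x ≠ grad φ x} ≤ (d : ℝ≥0∞) - 1 := by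
  classical
  set S := {x : Ed d | DiffAt ψ x ∧ DiffAt φ x ∧ ψ x - φ x = (t : EReal) ∧
      grad ψ x ≠ grad φ x} with hS
  obtain ⟨u, hu⟩ := TopologicalSpace.exists_dense_seq (Ed d)
  set T : ℕ → ℕ → Set (Ed d) := fun i j =>
    {x | x ∈ S ∧ ‖grad ψ x - u i‖ ≤ ‖u i - u j‖ / 8 ∧ ‖grad φ x - u j‖ ≤ ‖u i - u j‖ / 8}
    with hT
  have hcover : S ⊆ ⋃ (i : ℕ) (j : ℕ), T i j := by
    intro x hx
    obtain ⟨hdx, hdfx, hvx, hne⟩ := hx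
    set δ := ‖grad ψ x - grad φ x‖ with hδ
    have hδ0 : 0 < δ := by
      rw [hδ, norm_pos_iff, sub_ne_zero]
      exact hne
    obtain ⟨i, hi⟩ := hu.exists_dist_lt (grad ψ x) (show (0:ℝ) < δ/100 by positivity)
    obtain ⟨j, hj⟩ := hu.exists_dist_lt (grad φ x) (show (0:ℝ) < δ/100 by positivity)
    rw [dist_eq_norm] at hi hj
    have htri : δ ≤ ‖grad ψ x - u i‖ + ‖u i - u j‖ + ‖u j - grad φ x‖ := by
      have hdec : grad ψ x - grad φ x = (grad ψ x - u i) + (u i - u j) + (u j - grad φ x) := by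
        abel
      rw [hδ, hdec]
      exact norm_add₃_le
    have hj' : ‖u j - grad φ x‖ < δ/100 := by
      rw [norm_sub_rev]
      exact hj
    have hij : δ * (98/100) ≤ ‖u i - u j‖ := by linarith
    refine Set.mem_iUnion.2 ⟨i, Set.mem_iUnion.2 ⟨j, ⟨⟨hdx, hdfx, hvx, hne⟩, ?_, ?_⟩⟩⟩
    · linarith
    · linarith
  refine le_trans (dimH_mono hcover) ?_
  rw [dimH_iUnion]
  refine iSup_le fun i => ?_
  rw [dimH_iUnion]
  refine iSup_le fun j => ?_
  by_cases huij : u i = u j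
  · have hempty : T i j = ∅ := by
      ext x
      simp only [hT, Set.mem_setOf_eq, Set.mem_empty_iff_false, iff_false, not_and]
      rintro ⟨_, _, _, hne⟩ h1 h2
      rw [huij, sub_self, norm_zero, zero_div, norm_le_zero_iff, sub_eq_zero] at h1 h2
      exact hne (h1.trans h2.symm)
    rw [hempty, dimH_empty]
    exact zero_le
  · set ε := ‖u i - u j‖ with hε
    have hε0 : 0 < ε := by
      rw [hε, norm_pos_iff, sub_ne_zero]
      exact huij
    set e : Ed d := ε⁻¹ • (u i - u j) with he
    have hne1 : ‖e‖ = 1 := by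
      rw [he, norm_smul, norm_inv, Real.norm_eq_abs, abs_of_pos hε0, ← hε,
        inv_mul_cancel₀ hε0.ne']
    have hone : ∀ x ∈ T i j, ∀ y ∈ T i j,
        (inner ℝ (u i - u j) (y - x) : ℝ) ≤ (ε/4) * ‖y - x‖ := by
      rintro x ⟨hxS, hx1, hx2⟩ y ⟨hyS, hy1, hy2⟩
      obtain ⟨hdψx, hdφx, hvx, -⟩ := hxS
      obtain ⟨hdψy, hdφy, hvy, -⟩ := hyS
      obtain ⟨ax, bx, hax, hbx, htx⟩ := finite_vals hψ.1 hφ.1 hvx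
      obtain ⟨ay, by', hay, hby, hty⟩ := finite_vals hψ.1 hφ.1 hvy
      have hk := key_ineq hdψx hdφy hax hbx hay hby htx hty
      have hdecomp : (inner ℝ (u i - u j) (y - x) : ℝ)
          = (inner ℝ (grad ψ x - grad φ y) (y - x) : ℝ)
            + (inner ℝ (u i - grad ψ x) (y - x) : ℝ)
            + (inner ℝ (grad φ y - u j) (y - x) : ℝ) := by
        rw [← inner_add_left, ← inner_add_left]
        congr 1
        abel
      have c1 : (inner ℝ (u i - grad ψ x) (y - x) : ℝ) ≤ (ε/8) * ‖y - x‖ := by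
        refine le_trans (real_inner_le_norm _ _) ?_
        have h1 : ‖u i - grad ψ x‖ ≤ ε/8 := by
          rw [norm_sub_rev]
          exact hx1
        exact mul_le_mul_of_nonneg_right h1 (norm_nonneg _)
      have c2 : (inner ℝ (grad φ y - u j) (y - x) : ℝ) ≤ (ε/8) * ‖y - x‖ := by
        refine le_trans (real_inner_le_norm _ _) ?_
        exact mul_le_mul_of_nonneg_right hy2 (norm_nonneg _)
      rw [hdecomp]
      linarith
    have hbound : ∀ x ∈ T i j, ∀ y ∈ T i j,
        |(inner ℝ e (y - x) : ℝ)| ≤ (1/4) * ‖y - x‖ := by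
      intro x hx y hy
      have h1 := hone x hx y hy
      have h2 := hone y hy x hx
      have hneg : (inner ℝ (u i - u j) (x - y) : ℝ) = - (inner ℝ (u i - u j) (y - x) : ℝ) := by
        have hxy : (x : Ed d) - y = -(y - x) := by abel
        rw [hxy, inner_neg_right]
      rw [hneg, norm_sub_rev x y] at h2
      have habs : |(inner ℝ (u i - u j) (y - x) : ℝ)| ≤ (ε/4) * ‖y - x‖ := by
        rw [abs_le]
        constructor <;> linarith
      rw [he, real_inner_smul_left, abs_mul, abs_inv, abs_of_pos hε0]
      calc ε⁻¹ * |(inner ℝ (u i - u j) (y - x) : ℝ)|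
          ≤ ε⁻¹ * ((ε/4) * ‖y - x‖) := by
            exact mul_le_mul_of_nonneg_left habs (by positivity)
        _ = (1/4) * ‖y - x‖ := by
            field_simp
    set π : Ed d → Ed d := fun z => z - (inner ℝ e z : ℝ) • e with hπ
    have hkey : ∀ x ∈ T i j, ∀ y ∈ T i j, ‖y - x‖ ≤ 2 * ‖π y - π x‖ := by
      intro x hx y hy
      have hb := hbound x hx y hy
      set c : ℝ := (inner ℝ e (y - x) : ℝ) with hc
      have hπd : π y - π x = (y - x) - c • e := by
        rw [hπ]
        simp only
        rw [hc, inner_sub_right, sub_smul]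
        abel
      have hsq : ‖π y - π x‖^2 = ‖y - x‖^2 - c^2 := by
        rw [hπd, norm_sub_sq_real, real_inner_smul_right, real_inner_comm, ← hc,
          norm_smul, hne1, mul_one, Real.norm_eq_abs, sq_abs]
        ring
      have hc2 : c^2 ≤ ((1/4) * ‖y - x‖)^2 := by
        rw [← sq_abs]
        exact pow_le_pow_left₀ (abs_nonneg c) hb 2
      nlinarith [norm_nonneg (π y - π x), norm_nonneg (y - x)]
    have hd1 : dimH (T i j) ≤ dimH {z : Ed d | (inner ℝ e z : ℝ) = 0} := by
      set F : (T i j) → Ed d := fun z => π z.val with hF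
      have hanti : AntilipschitzWith 2 F := by
        apply AntilipschitzWith.of_le_mul_dist
        intro a b
        rw [Subtype.dist_eq, dist_eq_norm, dist_eq_norm]
        have h := hkey b b.2 a a.2
        simpa [hF] using h
      have h1 : dimH (T i j) = dimH (Set.univ : Set (T i j)) := by
        rw [← isometry_subtype_coe.dimH_image (Set.univ : Set (T i j)), Set.image_univ,
          Subtype.range_coe]
      rw [h1]
      refine le_trans (hanti.le_dimH_image Set.univ) (dimH_mono ?_)
      rintro _ ⟨z, -, rfl⟩
      simp only [hF, hπ, Set.mem_setOf_eq]
      rw [inner_sub_right, real_inner_smul_right, real_inner_self_eq_norm_sq, hne1]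
      ring
    exact le_trans hd1 (dimH_hyperplane_le hne1)
end

section
/- Let (μₙ) be a sequence of Borel probability measures on ℝ^d. Then μₙ converges weakly to a probability measure μ on ℝ^d if and only if the restrictions μₙ(· \ {0}) converge in M₀(ℝ^d) to some μ' ∈ M₀(ℝ^d); in that case μ' = μ(· \ {0}). -/
open MeasureTheory Filter Topology Set
open scoped Pointwise ENNReal

noncomputable section Helpers

variable {d : ℕ}

/-- continuous cutoff: `0` on `‖x‖ ≤ a`, `1` on `b ≤ ‖x‖`. -/
def cutf (d : ℕ) (a b : ℝ) (x : Ed d) : ℝ := min 1 (max 0 ((‖x‖ - a) / (b - a)))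

lemma cutf_cont (a b : ℝ) : Continuous (cutf d a b) :=
  continuous_const.min (continuous_const.max ((continuous_norm.sub continuous_const).div_const _))

lemma cutf_nonneg (a b : ℝ) (x : Ed d) : 0 ≤ cutf d a b x :=
  le_min zero_le_one (le_max_left _ _)

lemma cutf_le_one (a b : ℝ) (x : Ed d) : cutf d a b x ≤ 1 := min_le_left _ _

lemma cutf_abs_le (a b : ℝ) (x : Ed d) : |cutf d a b x| ≤ 1 :=
  abs_le.2 ⟨by linarith [cutf_nonneg (d := d) a b x], cutf_le_one a b x⟩

lemma cutf_eq_zero {a b : ℝ} (hab : a < b) {x : Ed d} (hx : ‖x‖ ≤ a) : cutf d a b x = 0 := by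
  have h1 : (‖x‖ - a) / (b - a) ≤ 0 :=
    div_nonpos_of_nonpos_of_nonneg (by linarith) (by linarith)
  simp [cutf, max_eq_left h1]

lemma cutf_eq_one {a b : ℝ} (hab : a < b) {x : Ed d} (hx : b ≤ ‖x‖) : cutf d a b x = 1 := by
  have h1 : (1 : ℝ) ≤ (‖x‖ - a) / (b - a) := by
    rw [le_div_iff₀ (by linarith)]
    linarith
  have : (1:ℝ) ≤ max 0 ((‖x‖ - a) / (b - a)) := le_max_of_le_right h1
  simp [cutf, min_eq_left this]

lemma cutf_testfun {a b : ℝ} (ha : 0 < a) (hab : a < b) : M0TestFun (cutf d a b) :=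
  ⟨cutf_cont a b, ⟨1, cutf_abs_le a b⟩, ⟨a, ha, fun _ hx => cutf_eq_zero hab hx⟩⟩

lemma cutf_mul_testfun {g : Ed d → ℝ} (hg : Continuous g) {C : ℝ} (hC : ∀ x, |g x| ≤ C)
    {a b : ℝ} (ha : 0 < a) (hab : a < b) :
    M0TestFun (fun x => g x * cutf d a b x) := by
  have hC0 : 0 ≤ C := le_trans (abs_nonneg _) (hC 0)
  refine ⟨hg.mul (cutf_cont a b), ⟨C, fun x => ?_⟩, ⟨a, ha, fun x hx => by
    simp [cutf_eq_zero hab hx]⟩⟩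
  rw [abs_mul]
  calc |g x| * |cutf d a b x| ≤ C * 1 :=
        mul_le_mul (hC x) (cutf_abs_le a b x) (abs_nonneg _) hC0
    _ = C := mul_one C

lemma integrable_of_bdd {f : Ed d → ℝ} (hf : Continuous f) {C : ℝ} (hC : ∀ x, |f x| ≤ C)
    (ν : Measure (Ed d)) [IsFiniteMeasure ν] : Integrable f ν :=
  (integrable_const C).mono' hf.aestronglyMeasurable
    (ae_of_all _ fun x => by simpa [Real.norm_eq_abs] using hC x)

lemma M0TestFun.zero_val {f : Ed d → ℝ} (hf : M0TestFun f) : f 0 = 0 := by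
  obtain ⟨-, -, r, hr, h⟩ := hf
  exact h 0 (by simp [le_of_lt hr])

lemma integral_restrict_compl_zero (f : Ed d → ℝ) (hf0 : f 0 = 0) (ν : Measure (Ed d)) :
    ∫ x, f x ∂(ν.restrict {0}ᶜ) = ∫ x, f x ∂ν :=
  setIntegral_eq_integral_of_forall_compl_eq_zero (fun x hx => by
    have : x = 0 := by simpa using hx
    simpa [this] using hf0)

lemma measure_le_ofReal_integral {ν : Measure (Ed d)} {f : Ed d → ℝ} (hint : Integrable f ν)
    (h0 : ∀ x, 0 ≤ f x) {S : Set (Ed d)} (hS : MeasurableSet S) (h1 : ∀ x ∈ S, f x = 1) :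
    ν S ≤ ENNReal.ofReal (∫ x, f x ∂ν) := by
  rw [ofReal_integral_eq_lintegral_ofReal hint (ae_of_all _ h0)]
  calc ν S = ∫⁻ x, S.indicator 1 x ∂ν := (lintegral_indicator_one hS).symm
    _ ≤ ∫⁻ x, ENNReal.ofReal (f x) ∂ν := by
        refine lintegral_mono fun x => ?_
        by_cases hx : x ∈ S
        · simp [indicator_of_mem hx, h1 x hx]
        · simp [indicator_of_notMem hx]

end Helpers


section Part2
variable {d : ℕ}

lemma measurable_norm_gt (r : ℝ) : MeasurableSet {x : Ed d | r < ‖x‖} :=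
  (isOpen_lt continuous_const continuous_norm).measurableSet

lemma measurable_norm_ge (r : ℝ) : MeasurableSet {x : Ed d | r ≤ ‖x‖} :=
  (isClosed_le continuous_const continuous_norm).measurableSet

lemma tail_le_one {μ : ℕ → Measure (Ed d)} (hprob : ∀ n, IsProbabilityMeasure (μ n))
    {μ' : Measure (Ed d)} (hM0 : IsM0 μ')
    (hconv : M0Tendsto (atTop : Filter ℕ) (fun n => (μ n).restrict {0}ᶜ) μ')
    {r : ℝ} (hr : 0 < r) : μ' {x | r < ‖x‖} ≤ 1 := by
  have hhalf : r / 2 < r := by linarith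
  have hhpos : 0 < r / 2 := by linarith
  set f := cutf d (r/2) r with hf
  have htest : M0TestFun f := cutf_testfun hhpos hhalf
  have hlim := hconv f htest
  have hub : ∀ n, ∫ x, f x ∂((μ n).restrict {0}ᶜ) ≤ 1 := by
    intro n
    haveI := hprob n
    have hb := norm_integral_le_of_norm_le_const (C := 1) (μ := (μ n).restrict {0}ᶜ)
      (f := f) (ae_of_all _ fun x => by simpa [Real.norm_eq_abs] using cutf_abs_le (r/2) r x)
    have hm : ((μ n).restrict {0}ᶜ Set.univ).toReal ≤ 1 := by
      rw [Measure.restrict_apply_univ]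
      exact ENNReal.toReal_mono ENNReal.one_ne_top prob_le_one |>.trans_eq ENNReal.toReal_one
    calc ∫ x, f x ∂((μ n).restrict {0}ᶜ) ≤ ‖∫ x, f x ∂((μ n).restrict {0}ᶜ)‖ :=
          le_abs_self _
      _ ≤ 1 * ((μ n).restrict {0}ᶜ Set.univ).toReal := hb
      _ ≤ 1 := by rw [one_mul]; exact hm
  have hI : ∫ x, f x ∂μ' ≤ 1 := le_of_tendsto hlim (Eventually.of_forall hub)
  -- integrability of f wrt μ'
  haveI hfinres : IsFiniteMeasure (μ'.restrict {x | r/2 < ‖x‖}) :=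
    ⟨by rw [Measure.restrict_apply_univ]; exact hM0.2 _ hhpos⟩
  have hint : Integrable f μ' := by
    have heq : f = Set.indicator {x : Ed d | r/2 < ‖x‖} f := by
      funext x
      by_cases hx : r/2 < ‖x‖
      · simp [indicator_of_mem, hx]
      · simp [indicator_of_notMem, hx, hf, cutf_eq_zero hhalf (le_of_not_gt hx)]
    rw [heq, integrable_indicator_iff (measurable_norm_gt (r/2))]
    exact integrable_of_bdd (cutf_cont _ _) (cutf_abs_le _ _) _
  have hkey : μ' {x | r ≤ ‖x‖} ≤ ENNReal.ofReal (∫ x, f x ∂μ') :=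
    measure_le_ofReal_integral hint (cutf_nonneg _ _) (measurable_norm_ge r)
      (fun x hx => cutf_eq_one hhalf hx)
  calc μ' {x | r < ‖x‖} ≤ μ' {x | r ≤ ‖x‖} := measure_mono (Set.setOf_subset_setOf.2 fun x => le_of_lt)
    _ ≤ ENNReal.ofReal (∫ x, f x ∂μ') := hkey
    _ ≤ ENNReal.ofReal 1 := ENNReal.ofReal_le_ofReal hI
    _ = 1 := ENNReal.ofReal_one

lemma compl_zero_eq_iUnion :
    ({0}ᶜ : Set (Ed d)) = ⋃ k : ℕ, {x | 1/(k+1 : ℝ) < ‖x‖} := by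
  ext x
  simp only [mem_compl_iff, mem_singleton_iff, mem_iUnion, mem_setOf_eq]
  constructor
  · intro hx
    have hpos : 0 < ‖x‖ := norm_pos_iff.2 hx
    obtain ⟨k, hk⟩ := exists_nat_one_div_lt hpos
    exact ⟨k, by exact_mod_cast hk⟩
  · rintro ⟨k, hk⟩
    intro h
    rw [h] at hk
    simp at hk
    have : (0:ℝ) < 1/(k+1 : ℝ) := by positivity
    linarith

lemma mass_le_one {μ' : Measure (Ed d)} (h0 : μ' {0} = 0)
    (htail : ∀ r : ℝ, 0 < r → μ' {x | r < ‖x‖} ≤ 1) : μ' Set.univ ≤ 1 := by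
  have hmono : Monotone (fun k : ℕ => {x : Ed d | 1/(k+1 : ℝ) < ‖x‖}) := by
    intro k m hkm x hx
    have h1 : 1/(m+1 : ℝ) ≤ 1/(k+1 : ℝ) := by
      apply one_div_le_one_div_of_le (by positivity)
      have : (k:ℝ) ≤ m := Nat.cast_le.mpr hkm
      linarith
    exact lt_of_le_of_lt h1 hx
  have hU := tendsto_measure_iUnion_atTop (μ := μ') hmono
  rw [← compl_zero_eq_iUnion] at hU
  have hle : μ' {0}ᶜ ≤ 1 :=
    le_of_tendsto hU (Eventually.of_forall fun k => htail _ (by positivity))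
  have := measure_add_measure_compl (μ := μ') (measurableSet_singleton (0 : Ed d))
  rw [← this, h0, zero_add]
  exact hle

lemma tendsto_cball_toReal {ν : Measure (Ed d)} [IsFiniteMeasure ν] (h0 : ν {0} = 0) :
    Tendsto (fun k : ℕ => (ν (Metric.closedBall 0 (1/(k+1 : ℝ)))).toReal) atTop (𝓝 0) := by
  have hanti : Antitone (fun k : ℕ => Metric.closedBall (0 : Ed d) (1/(k+1 : ℝ))) := by
    intro k m hkm
    apply Metric.closedBall_subset_closedBall
    apply one_div_le_one_div_of_le (by positivity)
    have : (k:ℝ) ≤ m := Nat.cast_le.mpr hkm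
    linarith
  have hI := tendsto_measure_iInter_atTop (μ := ν)
    (fun k => Metric.isClosed_closedBall.measurableSet.nullMeasurableSet) hanti
    ⟨0, (measure_lt_top ν _).ne⟩
  have hInter : (⋂ k : ℕ, Metric.closedBall (0 : Ed d) (1/(k+1 : ℝ))) = {0} := by
    ext x
    simp only [mem_iInter, Metric.mem_closedBall, dist_zero_right, mem_singleton_iff]
    constructor
    · intro hx
      by_contra hne
      have hpos : 0 < ‖x‖ := norm_pos_iff.2 hne
      obtain ⟨k, hk⟩ := exists_nat_one_div_lt hpos
      linarith [hx k]
    · rintro rfl k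
      simp
      positivity
  rw [hInter, h0] at hI
  have := (ENNReal.tendsto_toReal (a := 0) (by simp)).comp hI
  simpa [Function.comp_def] using this

end Part2


section Part3
variable {d : ℕ}

lemma weak_to_M0 {μ : ℕ → Measure (Ed d)} {μbar : Measure (Ed d)}
    (hpb : IsProbabilityMeasure μbar) (hw : WeakTendsto (atTop : Filter ℕ) μ μbar) :
    IsM0 (μbar.restrict {0}ᶜ) ∧
      M0Tendsto (atTop : Filter ℕ) (fun n => (μ n).restrict {0}ᶜ) (μbar.restrict {0}ᶜ) := by
  constructor
  · constructor
    · rw [Measure.restrict_apply (measurableSet_singleton 0)]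
      simp
    · intro r hr
      exact measure_lt_top _ _
  · intro f hf
    have hf0 : f 0 = 0 := hf.zero_val
    simp only [integral_restrict_compl_zero f hf0]
    exact hw f hf.1 hf.2.1

/-- For a finite measure with no atom at the origin, integrals against `g · χ_k`
converge to the integral of `g` as the cutoff radius shrinks. -/
lemma integral_cutf_tendsto {ν : Measure (Ed d)} [IsFiniteMeasure ν] (hν0 : ν {0} = 0)
    {g : Ed d → ℝ} (hg : Continuous g) {C : ℝ} (hC : ∀ x, |g x| ≤ C) :
    Tendsto (fun k : ℕ => ∫ x, g x * cutf d (1/(k+1:ℝ)/2) (1/(k+1:ℝ)) x ∂ν) atTop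
      (𝓝 (∫ x, g x ∂ν)) := by
  have hC0 : 0 ≤ C := le_trans (abs_nonneg _) (hC 0)
  rw [tendsto_iff_dist_tendsto_zero]
  apply squeeze_zero (fun k => dist_nonneg)
    (g := fun k : ℕ => C * (ν (Metric.closedBall 0 (1/(k+1:ℝ)))).toReal)
  · intro k
    have hrpos : (0:ℝ) < 1/(k+1:ℝ) := by positivity
    have hhalf : 1/(k+1:ℝ)/2 < 1/(k+1:ℝ) := by linarith
    set χ := cutf d (1/(k+1:ℝ)/2) (1/(k+1:ℝ)) with hχ
    have hint1 : Integrable (fun x => g x * χ x) ν :=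
      integrable_of_bdd (f := fun x => g x * χ x) (hg.mul (cutf_cont _ _)) (C := C)
        (fun x => by
          rw [abs_mul]
          calc |g x| * |χ x| ≤ C * 1 :=
                mul_le_mul (hC x) (cutf_abs_le _ _ x) (abs_nonneg _) hC0
            _ = C := mul_one C) ν
    have hint2 : Integrable g ν := integrable_of_bdd hg hC ν
    rw [Real.dist_eq, ← integral_sub hint1 hint2]
    have hvan : ∀ x ∉ Metric.closedBall (0 : Ed d) (1/(k+1:ℝ)),
        g x * χ x - g x = 0 := by
      intro x hx
      have hxr : 1/(k+1:ℝ) < ‖x‖ := by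
        simpa [Metric.mem_closedBall, dist_zero_right, not_le] using hx
      rw [hχ, cutf_eq_one hhalf hxr.le]
      ring
    rw [← setIntegral_eq_integral_of_forall_compl_eq_zero hvan, ← Real.norm_eq_abs]
    refine norm_setIntegral_le_of_norm_le_const (measure_lt_top ν _) (fun x _ => ?_)
    · rw [Real.norm_eq_abs]
      calc |g x * χ x - g x| = |g x| * |χ x - 1| := by rw [← abs_mul]; ring_nf
        _ ≤ C * 1 := by
            refine mul_le_mul (hC x) ?_ (abs_nonneg _) hC0
            rw [abs_sub_comm, abs_le]
            constructor <;> [linarith [cutf_le_one (1/(k+1:ℝ)/2) (1/(k+1:ℝ)) x];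
              linarith [cutf_nonneg (1/(k+1:ℝ)/2) (1/(k+1:ℝ)) x]]
        _ = C := mul_one C
  · have := (tendsto_cball_toReal (ν := ν) hν0).const_mul C
    simpa using this

lemma M0_limit_unique {μ' ν : Measure (Ed d)} [IsFiniteMeasure μ'] [IsFiniteMeasure ν]
    (h0 : μ' {0} = 0) (h0' : ν {0} = 0)
    (heq : ∀ f : Ed d → ℝ, M0TestFun f → ∫ x, f x ∂μ' = ∫ x, f x ∂ν) : μ' = ν := by
  have key : ∀ g : Ed d → ℝ, Continuous g → ∀ C : ℝ, (∀ x, |g x| ≤ C) →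
      ∫ x, g x ∂μ' = ∫ x, g x ∂ν := by
    intro g hg C hC
    have h1 := integral_cutf_tendsto h0 hg hC
    have h2 := integral_cutf_tendsto h0' hg hC
    have hsame : ∀ k : ℕ, ∫ x, g x * cutf d (1/(k+1:ℝ)/2) (1/(k+1:ℝ)) x ∂μ'
        = ∫ x, g x * cutf d (1/(k+1:ℝ)/2) (1/(k+1:ℝ)) x ∂ν := by
      intro k
      exact heq _ (cutf_mul_testfun hg hC (by positivity) (by
        have : (0:ℝ) < 1/(k+1:ℝ) := by positivity
        linarith))
    simp only [hsame] at h1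
    exact tendsto_nhds_unique h1 h2
  apply ext_of_forall_lintegral_eq_of_IsFiniteMeasure
  intro f
  obtain ⟨Cf, hCf⟩ := f.bounded
  set g : Ed d → ℝ := fun x => (f x : ℝ) with hgdef
  have hgc : Continuous g := NNReal.continuous_coe.comp f.continuous
  have hgnn : ∀ x, 0 ≤ g x := fun x => (f x).coe_nonneg
  have hgb : ∀ x, |g x| ≤ Cf + (f 0 : ℝ) := by
    intro x
    rw [abs_of_nonneg (hgnn x)]
    have := hCf x 0
    rw [NNReal.dist_eq] at this
    have h2 : (f x : ℝ) - (f 0 : ℝ) ≤ Cf := le_trans (le_abs_self _) this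
    linarith
  have hint1 : Integrable g μ' := integrable_of_bdd hgc hgb μ'
  have hint2 : Integrable g ν := integrable_of_bdd hgc hgb ν
  have e1 : ∫⁻ x, (f x : ℝ≥0∞) ∂μ' = ENNReal.ofReal (∫ x, g x ∂μ') := by
    rw [ofReal_integral_eq_lintegral_ofReal hint1 (ae_of_all _ hgnn)]
    simp [hgdef, ENNReal.ofReal_coe_nnreal]
  have e2 : ∫⁻ x, (f x : ℝ≥0∞) ∂ν = ENNReal.ofReal (∫ x, g x ∂ν) := by
    rw [ofReal_integral_eq_lintegral_ofReal hint2 (ae_of_all _ hgnn)]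
    simp [hgdef, ENNReal.ofReal_coe_nnreal]
  rw [e1, e2, key g hgc _ hgb]

end Part3


section Part4
variable {d : ℕ}

set_option maxHeartbeats 2000000 in
lemma M0_to_weak {μ : ℕ → Measure (Ed d)} (hprob : ∀ n, IsProbabilityMeasure (μ n))
    {μ' : Measure (Ed d)} (hM0 : IsM0 μ')
    (hconv : M0Tendsto (atTop : Filter ℕ) (fun n => (μ n).restrict {0}ᶜ) μ') :
    ∃ μbar : Measure (Ed d), IsProbabilityMeasure μbar ∧
      WeakTendsto (atTop : Filter ℕ) μ μbar := by
  have htail : ∀ r : ℝ, 0 < r → μ' {x | r < ‖x‖} ≤ 1 :=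
    fun r hr => tail_le_one hprob hM0 hconv hr
  have hmass : μ' Set.univ ≤ 1 := mass_le_one hM0.1 htail
  haveI hfin : IsFiniteMeasure μ' := ⟨lt_of_le_of_lt hmass ENNReal.one_lt_top⟩
  have hmtopR : (μ' Set.univ).toReal ≤ 1 := by
    calc (μ' Set.univ).toReal ≤ (1 : ℝ≥0∞).toReal :=
          ENNReal.toReal_mono ENNReal.one_ne_top hmass
      _ = 1 := ENNReal.toReal_one
  refine ⟨μ' + (1 - μ' Set.univ) • Measure.dirac 0, ⟨?_⟩, ?_⟩
  · simp only [Measure.coe_add, Pi.add_apply, Measure.smul_apply, smul_eq_mul,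
      measure_univ, mul_one]
    exact add_tsub_cancel_of_le hmass
  · intro g hg hCex
    obtain ⟨C, hC⟩ := hCex
    have hC0 : 0 ≤ C := le_trans (abs_nonneg _) (hC 0)
    haveI hfind : IsFiniteMeasure ((1 - μ' Set.univ) • Measure.dirac (0 : Ed d)) := by
      refine ⟨?_⟩
      simp only [Measure.smul_apply, smul_eq_mul, measure_univ, mul_one]
      exact lt_of_le_of_lt tsub_le_self ENNReal.one_lt_top
    have hgint' : Integrable g μ' := integrable_of_bdd hg hC μ'
    have hgintd : Integrable g ((1 - μ' Set.univ) • Measure.dirac (0 : Ed d)) :=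
      integrable_of_bdd hg hC _
    have hLval : ∫ x, g x ∂(μ' + (1 - μ' Set.univ) • Measure.dirac 0)
        = ∫ x, g x ∂μ' + (1 - (μ' Set.univ).toReal) * g 0 := by
      rw [integral_add_measure hgint' hgintd, integral_smul_measure, integral_dirac,
        ENNReal.toReal_sub_of_le hmass ENNReal.one_ne_top, ENNReal.toReal_one,
        smul_eq_mul]
    rw [hLval]
    rw [Metric.tendsto_atTop]
    intro ε hε
    -- quantities
    have hεC : 0 < ε / (8 * (C + 1)) := by positivity
    -- choose δ from continuity of g at 0
    obtain ⟨δ, hδpos, hδ⟩ : ∃ δ > 0, ∀ x : Ed d, ‖x‖ < δ → |g x - g 0| < ε / 8 := by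
      have hcont := Metric.continuousAt_iff.mp (hg.continuousAt (x := (0 : Ed d))) (ε / 8) (by positivity)
      obtain ⟨δ, hδpos, hδ⟩ := hcont
      exact ⟨δ, hδpos, fun x hx => by
        have := hδ (show dist x 0 < δ by simpa [dist_zero_right] using hx)
        simpa [Real.dist_eq] using this⟩
    -- choose k from vanishing small balls
    obtain ⟨k, hk⟩ : ∃ k : ℕ, (μ' (Metric.closedBall 0 (1/(k+1:ℝ)))).toReal < ε / (8*(C+1)) := by
      have h := tendsto_cball_toReal (ν := μ') hM0.1
      exact (h.eventually (eventually_lt_nhds hεC)).exists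
    set r : ℝ := min (δ/2) (1/(k+1:ℝ)) with hrdef
    have hrpos : 0 < r := lt_min (by linarith) (by positivity)
    have hhalf : r/2 < r := by linarith
    have hrδ : r < δ := lt_of_le_of_lt (min_le_left _ _) (by linarith)
    have hball : (μ' (Metric.closedBall 0 r)).toReal ≤ ε / (8*(C+1)) := by
      refine le_of_lt (lt_of_le_of_lt ?_ hk)
      exact ENNReal.toReal_mono (measure_lt_top _ _).ne
        (measure_mono (Metric.closedBall_subset_closedBall (min_le_right _ _)))
    set χ := cutf d (r/2) r with hχdef
    have hχcont : Continuous χ := cutf_cont _ _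
    have hχtest : M0TestFun χ := cutf_testfun (by linarith) hhalf
    have hgχtest : M0TestFun (fun x => g x * χ x) := cutf_mul_testfun hg hC (by linarith) hhalf
    have hχ0 : χ 0 = 0 := hχtest.zero_val
    have hgχ0 : g 0 * χ 0 = 0 := by rw [hχ0]; ring
    have h1 := hconv _ hgχtest
    have h2 := hconv _ hχtest
    simp only [integral_restrict_compl_zero (fun x => g x * χ x) hgχ0,
      integral_restrict_compl_zero χ hχ0] at h1 h2
    -- abbreviations for the limit integrals
    set A : ℝ := ∫ x, g x * χ x ∂μ' with hA
    set B : ℝ := ∫ x, χ x ∂μ' with hB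
    -- integrability of everything wrt μ'
    have hgχb : ∀ x, |g x * χ x| ≤ C := fun x => by
      rw [abs_mul]
      calc |g x| * |χ x| ≤ C * 1 :=
            mul_le_mul (hC x) (cutf_abs_le _ _ x) (abs_nonneg _) hC0
        _ = C := mul_one C
    have hintgχ' : Integrable (fun x => g x * χ x) μ' :=
      integrable_of_bdd (hg.mul hχcont) hgχb μ'
    have hintχ' : Integrable χ μ' := integrable_of_bdd hχcont (cutf_abs_le _ _) μ'
    -- |D| ≤ ε/8 where D = ∫ g dμ' - A
    have hDb : |∫ x, g x ∂μ' - A| ≤ ε / 8 := by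
      rw [hA, ← integral_sub hgint' hintgχ']
      have hvan : ∀ x ∉ Metric.closedBall (0 : Ed d) r, g x - g x * χ x = 0 := by
        intro x hx
        have hxr : r < ‖x‖ := by
          simpa [Metric.mem_closedBall, dist_zero_right, not_le] using hx
        rw [hχdef, cutf_eq_one hhalf hxr.le]
        ring
      rw [← setIntegral_eq_integral_of_forall_compl_eq_zero hvan, ← Real.norm_eq_abs]
      have hb := norm_setIntegral_le_of_norm_le_const (μ := μ')
        (s := Metric.closedBall 0 r) (C := C) (measure_lt_top μ' _)
        (fun x _ => by
          rw [Real.norm_eq_abs]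
          calc |g x - g x * χ x| = |g x| * |1 - χ x| := by rw [← abs_mul]; ring_nf
            _ ≤ C * 1 := by
                refine mul_le_mul (hC x) ?_ (abs_nonneg _) hC0
                rw [abs_le]
                constructor
                · linarith [cutf_le_one (r/2) r x]
                · linarith [cutf_nonneg (r/2) r x]
            _ = C := mul_one C)
      refine le_trans hb ?_
      calc C * (μ' (Metric.closedBall 0 r)).toReal ≤ C * (ε / (8*(C+1))) :=
            mul_le_mul_of_nonneg_left hball hC0
        _ ≤ (C+1) * (ε / (8*(C+1))) := by
            apply mul_le_mul_of_nonneg_right (by linarith) (le_of_lt hεC)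
        _ = ε / 8 := by field_simp
    -- |m.toReal - B| ≤ ε/(8(C+1))
    have hmB : |(μ' Set.univ).toReal - B| ≤ ε / (8*(C+1)) := by
      have hid : (μ' Set.univ).toReal - B = ∫ x, (1 - χ x) ∂μ' := by
        rw [integral_sub (integrable_const 1) hintχ', integral_const, smul_eq_mul, mul_one, hB, measureReal_def]
      rw [hid]
      have hvan : ∀ x ∉ Metric.closedBall (0 : Ed d) r, (1 : ℝ) - χ x = 0 := by
        intro x hx
        have hxr : r < ‖x‖ := by
          simpa [Metric.mem_closedBall, dist_zero_right, not_le] using hx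
        rw [hχdef, cutf_eq_one hhalf hxr.le]
        ring
      rw [← setIntegral_eq_integral_of_forall_compl_eq_zero hvan, ← Real.norm_eq_abs]
      have hb : ‖∫ x in Metric.closedBall 0 r, (1 - χ x) ∂μ'‖
          ≤ 1 * (μ' (Metric.closedBall 0 r)).toReal := by
        refine norm_setIntegral_le_of_norm_le_const (measure_lt_top μ' _) (fun x _ => ?_)
        rw [Real.norm_eq_abs, abs_le]
        constructor
        · linarith [cutf_le_one (r/2) r x]
        · linarith [cutf_nonneg (r/2) r x]
      refine le_trans hb ?_
      rw [one_mul]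
      exact hball
    -- eventual bounds from h1, h2
    obtain ⟨N1, hN1⟩ := Metric.tendsto_atTop.mp h1 (ε/8) (by positivity)
    obtain ⟨N2, hN2⟩ := Metric.tendsto_atTop.mp h2 (ε/(8*(C+1))) hεC
    refine ⟨max N1 N2, fun n hn => ?_⟩
    haveI := hprob n
    have hIn1 : |∫ x, g x * χ x ∂(μ n) - A| < ε/8 := by
      have := hN1 n (le_trans (le_max_left _ _) hn)
      rwa [Real.dist_eq] at this
    have hIn2 : |∫ x, χ x ∂(μ n) - B| < ε/(8*(C+1)) := by
      have := hN2 n (le_trans (le_max_right _ _) hn)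
      rwa [Real.dist_eq] at this
    -- integrability wrt μ n
    have hgintn : Integrable g (μ n) := integrable_of_bdd hg hC (μ n)
    have hintgχn : Integrable (fun x => g x * χ x) (μ n) :=
      integrable_of_bdd (hg.mul hχcont) hgχb (μ n)
    have hintχn : Integrable χ (μ n) := integrable_of_bdd hχcont (cutf_abs_le _ _) (μ n)
    -- the remainder bound
    have hRn : |∫ x, g x ∂(μ n) - ∫ x, g x * χ x ∂(μ n)
        - g 0 * (1 - ∫ x, χ x ∂(μ n))| ≤ ε/8 := by
      have hid : ∫ x, g x ∂(μ n) - ∫ x, g x * χ x ∂(μ n) - g 0 * (1 - ∫ x, χ x ∂(μ n))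
          = ∫ x, (g x - g 0) * (1 - χ x) ∂(μ n) := by
        have hptw : ∀ x, (g x - g 0) * (1 - χ x)
            = (g x - g x * χ x) - (g 0 - g 0 * χ x) := fun x => by ring
        rw [show (fun x => (g x - g 0) * (1 - χ x))
            = fun x => (g x - g x * χ x) - (g 0 - g 0 * χ x) from funext hptw]
        have hi1 : Integrable (fun x => g x - g x * χ x) (μ n) := hgintn.sub hintgχn
        have hi3 : Integrable (fun x => g 0 * χ x) (μ n) := hintχn.const_mul (g 0)
        have hi2 : Integrable (fun x => g 0 - g 0 * χ x) (μ n) :=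
          (integrable_const (g 0)).sub hi3
        rw [integral_sub hi1 hi2, integral_sub hgintn hintgχn,
          integral_sub (integrable_const (g 0)) hi3,
          integral_const, integral_const_mul, probReal_univ, one_smul]
        ring
      rw [hid, ← Real.norm_eq_abs]
      have hb := norm_integral_le_of_norm_le_const (μ := μ n) (C := ε/8)
        (f := fun x => (g x - g 0) * (1 - χ x))
        (ae_of_all _ (fun x => by
          rw [Real.norm_eq_abs, abs_mul]
          by_cases hx : ‖x‖ ≤ r
          · calc |g x - g 0| * |1 - χ x| ≤ (ε/8) * 1 := by
                  refine mul_le_mul (le_of_lt (hδ x (lt_of_le_of_lt hx hrδ))) ?_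
                    (abs_nonneg _) (by positivity)
                  rw [abs_le]
                  constructor
                  · linarith [cutf_le_one (r/2) r x]
                  · linarith [cutf_nonneg (r/2) r x]
              _ = ε/8 := mul_one _
          · have : χ x = 1 := cutf_eq_one hhalf (le_of_not_ge hx)
            rw [this]
            simp
            positivity))
      refine le_trans hb ?_
      rw [probReal_univ, mul_one]
    -- final assembly
    rw [Real.dist_eq]
    have hiden : ∫ x, g x ∂(μ n) - (∫ x, g x ∂μ' + (1 - (μ' Set.univ).toReal) * g 0)
        = (∫ x, g x * χ x ∂(μ n) - A)
          + (∫ x, g x ∂(μ n) - ∫ x, g x * χ x ∂(μ n) - g 0 * (1 - ∫ x, χ x ∂(μ n)))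
          - (∫ x, g x ∂μ' - A)
          + g 0 * ((μ' Set.univ).toReal - B)
          + g 0 * (B - ∫ x, χ x ∂(μ n)) := by ring
    rw [hiden]
    have hb4 : |g 0 * ((μ' Set.univ).toReal - B)| ≤ C * (ε/(8*(C+1))) := by
      rw [abs_mul]
      exact mul_le_mul (hC 0) hmB (abs_nonneg _) hC0
    have hb5 : |g 0 * (B - ∫ x, χ x ∂(μ n))| ≤ C * (ε/(8*(C+1))) := by
      rw [abs_mul]
      refine mul_le_mul (hC 0) ?_ (abs_nonneg _) hC0
      rw [abs_sub_comm]
      exact le_of_lt hIn2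
    have hq : C * (ε/(8*(C+1))) ≤ ε/8 := by
      calc C * (ε/(8*(C+1))) ≤ (C+1) * (ε/(8*(C+1))) :=
            mul_le_mul_of_nonneg_right (by linarith) (le_of_lt hεC)
        _ = ε/8 := by field_simp
    obtain ⟨ha1, ha2⟩ := abs_lt.mp hIn1
    obtain ⟨hb1, hb2⟩ := abs_le.mp hRn
    obtain ⟨hc1, hc2⟩ := abs_le.mp hDb
    obtain ⟨hd1, hd2⟩ := abs_le.mp hb4
    obtain ⟨he1, he2⟩ := abs_le.mp hb5
    rw [abs_lt]
    constructor <;> nlinarith [hq]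

end Part4


/-- **Statement 4** (Lemma 4.1): a sequence of Borel probability measures on `ℝ^d`
converges weakly to a probability measure iff the restrictions to the complement of the
origin converge in `M₀(ℝ^d)`; in that case the `M₀`-limit is the restriction of the weak
limit to the complement of the origin. -/
theorem tails_of_ot_weak_iff_M0
    (d : ℕ) (μ : ℕ → Measure (Ed d)) (hprob : ∀ n, IsProbabilityMeasure (μ n)) :
    ((∃ μbar : Measure (Ed d), IsProbabilityMeasure μbar ∧
        WeakTendsto (atTop : Filter ℕ) μ μbar) ↔
      (∃ μ' : Measure (Ed d), IsM0 μ' ∧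
        M0Tendsto (atTop : Filter ℕ) (fun n => (μ n).restrict {0}ᶜ) μ')) ∧
    (∀ (μbar μ' : Measure (Ed d)), IsProbabilityMeasure μbar →
      WeakTendsto (atTop : Filter ℕ) μ μbar → IsM0 μ' →
      M0Tendsto (atTop : Filter ℕ) (fun n => (μ n).restrict {0}ᶜ) μ' →
      μ' = μbar.restrict {0}ᶜ) := by
  
  constructor
  · constructor
    · rintro ⟨μbar, hpb, hw⟩
      obtain ⟨hm0, hmt⟩ := weak_to_M0 hpb hw
      exact ⟨μbar.restrict {0}ᶜ, hm0, hmt⟩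
    · rintro ⟨μ', hM0, hconv⟩
      exact M0_to_weak hprob hM0 hconv
  · intro μbar μ' hpb hw hM0 hconv
    obtain ⟨hm0bar, hmtbar⟩ := weak_to_M0 hpb hw
    have htail : ∀ r : ℝ, 0 < r → μ' {x | r < ‖x‖} ≤ 1 :=
      fun r hr => tail_le_one hprob hM0 hconv hr
    haveI : IsFiniteMeasure μ' :=
      ⟨lt_of_le_of_lt (mass_le_one hM0.1 htail) ENNReal.one_lt_top⟩
    haveI : IsFiniteMeasure (μbar.restrict {0}ᶜ) := by infer_instance
    refine M0_limit_unique hM0.1 hm0bar.1 fun f hf => ?_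
    exact tendsto_nhds_unique (hconv f hf) (hmtbar f hf)
end

section
/- Let ψ : ℝ^d → ℝ ∪ {+∞} be a closed proper convex function and let D ⊂ ℝ^d satisfy D ∩ dom ψ ≠ ∅. Define g(x) = ψ(x) for x ∈ D and g(x) = +∞ for x ∉ D, and let φ be the function whose epigraph is cl(conv(epi g)). Then φ is a closed convex function satisfying: (a) φ ≥ ψ everywhere; (b) φ(x) = ψ(x) for all x ∈ D; (c) for every x ∈ D, ∂φ(x) = {v ∈ ℝ^d : ∀z ∈ D, ψ(z) ≥ ψ(x) + ⟨z − x, v⟩} ⊇ ∂ψ(x); (d) dom ∇φ ⊂ dom ∂ψ; (e) for every x ∈ D at which φ is differentiable, ψ is differentiable at x and ∇φ(x) = ∇ψ(x). -/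
open MeasureTheory Filter Topology Set
open scoped Pointwise ENNReal

section AuxLemmas
open Set Filter Topology

/-- key EReal inf lemma -/
lemma aux_ereal_le {a b : EReal} (h : ∀ r : ℝ, b ≤ (r:EReal) → a ≤ (r:EReal)) : a ≤ b := by
  induction b with
  | bot =>
    induction a with
    | bot => exact le_rfl
    | coe r => exact absurd (h (r-1) bot_le) (by exact_mod_cast (by linarith : ¬ (r:ℝ) ≤ r - 1))
    | top => exact absurd (h 0 bot_le) (by simp)
  | coe r => exact h r le_rfl
  | top => exact le_top

/-- lsc from closed epigraph -/
lemma aux_lsc_of_closed {E : Type*} [TopologicalSpace E] {f : E → EReal}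
    (h : IsClosed {p : E × ℝ | f p.1 ≤ (p.2 : EReal)}) : LowerSemicontinuous f := by
  intro x y hy
  obtain ⟨c, hc1, hc2⟩ := exists_between hy
  lift c to ℝ using ⟨(hc2.trans_le le_top).ne, (bot_le.trans_lt hc1).ne'⟩
  have hopen : IsOpen {z : E | ¬ f z ≤ (c : EReal)} := by
    have : Continuous fun z : E => (z, c) := by fun_prop
    exact (h.isOpen_compl.preimage this)
  filter_upwards [hopen.mem_nhds (by simpa using hc2.not_ge)] with z hz
  exact hc1.trans (not_le.1 hz)

/-- closed epigraph from lsc -/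
lemma aux_closed_of_lsc {E : Type*} [TopologicalSpace E] {f : E → EReal}
    (h : LowerSemicontinuous f) : IsClosed {p : E × ℝ | f p.1 ≤ (p.2 : EReal)} := by
  rw [← isOpen_compl_iff]
  rw [isOpen_iff_mem_nhds]
  rintro ⟨x, r⟩ hp
  simp only [mem_compl_iff, mem_setOf_eq, not_le] at hp
  obtain ⟨c, hc1, hc2⟩ := exists_between hp
  lift c to ℝ using ⟨(hc2.trans_le le_top).ne, (bot_le.trans_lt hc1).ne'⟩
  have h1 : ∀ᶠ z in 𝓝 x, (c:EReal) < f z := h x _ hc2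
  have h2 : ∀ᶠ t in 𝓝 r, t < c := Filter.Tendsto.eventually_lt_const (by exact_mod_cast hc1) tendsto_id
  have := (h1.prod_nhds h2 : ∀ᶠ q : E × ℝ in 𝓝 (x, r), (c:EReal) < f q.1 ∧ q.2 < c)
  filter_upwards [this] with q ⟨hq1, hq2⟩
  simp only [mem_compl_iff, mem_setOf_eq, not_le]
  exact lt_trans (by exact_mod_cast hq2) hq1

/-- linear functional bounded on convex set from bound on interior -/
lemma aux_le_on {E : Type*} [NormedAddCommGroup E] [NormedSpace ℝ E] {s : Set E}
    (hs : Convex ℝ s) {p₀ : E} (hp₀ : p₀ ∈ interior s) (f : E →L[ℝ] ℝ) {c : ℝ}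
    (hf : ∀ p ∈ interior s, f p < c) {p : E} (hp : p ∈ s) : f p ≤ c := by
  have hseq : ∀ n : ℕ, f (p + ((n:ℝ)+1)⁻¹ • (p₀ - p)) < c := fun n =>
    hf _ (hs.add_smul_sub_mem_interior hp hp₀ ⟨by positivity, by
      rw [inv_le_one_iff₀]; right; linarith [Nat.cast_nonneg (α := ℝ) n]⟩)
  have htend : Tendsto (fun n : ℕ => p + ((n:ℝ)+1)⁻¹ • (p₀ - p)) atTop (𝓝 p) := by
    have h0 : Tendsto (fun n : ℕ => ((n:ℝ)+1)⁻¹) atTop (𝓝 0) := by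
      simpa using tendsto_one_div_add_atTop_nhds_zero_nat (𝕜 := ℝ)
    simpa using tendsto_const_nhds.add ((h0.smul_const (p₀ - p)).mono_right le_rfl)
  have := ((f.continuous.tendsto p).comp htend)
  exact le_of_tendsto this (Eventually.of_forall fun n => (hseq n).le)


lemma aux_sum_coord (d : ℕ) (u : Ed d) :
    ∑ i : Fin d, u i • EuclideanSpace.single i (1:ℝ) = u := by
  ext j
  rw [WithLp.ofLp_sum, Finset.sum_apply]
  simp only [PiLp.smul_apply, EuclideanSpace.single_apply, smul_eq_mul, mul_ite, mul_one, mul_zero]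
  simp [Finset.sum_ite_eq]

lemma aux_abs_coord {d : ℕ} (u : Ed d) (i : Fin d) : |u i| ≤ ‖u‖ := by
  rw [EuclideanSpace.norm_eq, ← Real.sqrt_sq_eq_abs]
  apply Real.sqrt_le_sqrt
  exact Finset.single_le_sum (f := fun j => ‖u j‖^2) (fun j _ => by positivity)
    (Finset.mem_univ i) |>.trans_eq' (by rw [Real.norm_eq_abs, sq_abs])

/-- local upper bound for a convex (epigraph) function at interior points of its domain -/
lemma aux_local_bound {d : ℕ} (ψ : Ed d → EReal) (hbot : ∀ y, ψ y ≠ ⊥)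
    (hconv : Convex ℝ {p : Ed d × ℝ | ψ p.1 ≤ (p.2:EReal)}) {x : Ed d}
    (hx : x ∈ interior {y | ψ y ≠ ⊤}) :
    ∃ δ > 0, ∃ M : ℝ, ∀ y, dist y x < δ → ψ y ≤ (M:EReal) := by
  obtain ⟨ε, hε, hball⟩ := Metric.isOpen_iff.1 isOpen_interior x hx
  have hdom : ∀ y, dist y x < ε → ψ y ≠ ⊤ := fun y hy => interior_subset (hball hy)
  set pt : Option (Fin d × Bool) → Ed d := fun j => match j with
    | none => x
    | some (i, b) => x + (if b then (ε/2) else (-(ε/2))) • EuclideanSpace.single i 1 with hpt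
  have hptdom : ∀ j, ψ (pt j) ≠ ⊤ := by
    rintro (_ | ⟨i, b⟩)
    · exact hdom x (by simpa using hε)
    · apply hdom
      rw [dist_eq_norm]
      simp only [hpt, add_sub_cancel_left, norm_smul, EuclideanSpace.norm_single, norm_one,
        mul_one, Real.norm_eq_abs]
      rcases b with _ | _ <;> simp [abs_of_pos, hε, abs_of_neg] <;> linarith
  set M : ℝ := Finset.univ.sup' (Finset.univ_nonempty) (fun j => (ψ (pt j)).toReal) with hM
  have hMj : ∀ j, ψ (pt j) ≤ (M:EReal) := by
    intro j
    rw [← EReal.coe_toReal (hptdom j) (hbot _)]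
    exact_mod_cast Finset.le_sup' (fun j => (ψ (pt j)).toReal) (Finset.mem_univ j)
  refine ⟨ε / (2*(d+1)), by positivity, M, ?_⟩
  intro y hy
  set u : Ed d := y - x with hu
  set w : Option (Fin d × Bool) → ℝ := fun j => match j with
    | none => 1 - (∑ i, |u i|)/(ε/2)
    | some (i, b) => (if b then max (u i) 0 else max (-(u i)) 0)/(ε/2) with hw
  have habs : ∀ i, |u i| ≤ ε / (2*(d+1)) := fun i => (aux_abs_coord u i).trans
    (by rw [← dist_eq_norm]; exact hy.le)
  have hsumabs : (∑ i, |u i|) ≤ d * (ε / (2*(d+1))) := by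
    calc (∑ i : Fin d, |u i|) ≤ ∑ _i : Fin d, ε / (2*(d+1)) :=
          Finset.sum_le_sum (fun i _ => habs i)
      _ = d * (ε / (2*(d+1))) := by simp [mul_comm]
  have hfrac : (∑ i, |u i|)/(ε/2) < 1 := by
    rw [div_lt_one (by positivity)]
    calc (∑ i, |u i|) ≤ d * (ε / (2*(d+1))) := hsumabs
      _ < ε / 2 := by
          rw [mul_div_assoc']
          rw [div_lt_div_iff₀ (by positivity) (by norm_num)]
          ring_nf
          nlinarith [hε]
  have hwnn : ∀ j, 0 ≤ w j := by
    rintro (_ | ⟨i, b⟩)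
    · simpa [hw] using hfrac.le
    · have : (0:ℝ) < ε/2 := by positivity
      rcases b with _ | _ <;> simp [hw] <;> positivity
  have hhalf : (ε/2) ≠ 0 := by positivity
  have hmaxsub : ∀ i : Fin d, max (u i) 0 - max (-(u i)) 0 = u i := by
    intro i
    rcases le_or_gt 0 (u i) with h | h
    · rw [max_eq_left h, max_eq_right (by linarith)]; ring
    · rw [max_eq_right h.le, max_eq_left (by linarith)]; ring
  have hmaxadd : ∀ i : Fin d, max (u i) 0 + max (-(u i)) 0 = |u i| := by
    intro i
    rcases le_or_gt 0 (u i) with h | h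
    · rw [max_eq_left h, max_eq_right (by linarith), abs_of_nonneg h]; ring
    · rw [max_eq_right h.le, max_eq_left (by linarith), abs_of_neg h]; ring
  have hwsum : ∑ j, w j = 1 := by
    rw [Fintype.sum_option, Fintype.sum_prod_type]
    have hterm : ∀ i : Fin d, ∑ b : Bool, w (some (i, b)) = |u i| / (ε/2) := by
      intro i
      rw [Fintype.sum_bool]
      have e1 : w (some (i, true)) = max (u i) 0 / (ε/2) := rfl
      have e2 : w (some (i, false)) = max (-(u i)) 0 / (ε/2) := rfl
      rw [e1, e2, ← add_div, hmaxadd i]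
    rw [Finset.sum_congr rfl (fun i _ => hterm i)]
    have e0 : w none = 1 - (∑ i, |u i|)/(ε/2) := rfl
    rw [e0, ← Finset.sum_div]
    ring
  have hmem : ∑ j, w j • ((pt j, M) : Ed d × ℝ) ∈ {p : Ed d × ℝ | ψ p.1 ≤ (p.2:EReal)} :=
    hconv.sum_mem (fun j _ => hwnn j) hwsum (fun j _ => hMj j)
  have key : ∀ i : Fin d, w (some (i,true)) • ((ε/2) • EuclideanSpace.single i (1:ℝ))
      + w (some (i,false)) • ((-(ε/2)) • EuclideanSpace.single i (1:ℝ))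
      = u i • EuclideanSpace.single i (1:ℝ) := by
    intro i
    rw [smul_smul, smul_smul, ← add_smul]
    congr 1
    have e1 : w (some (i,true)) = max (u i) 0 / (ε/2) := rfl
    have e2 : w (some (i,false)) = max (-(u i)) 0 / (ε/2) := rfl
    rw [e1, e2, div_mul_cancel₀ _ hhalf, mul_neg, div_mul_cancel₀ _ hhalf, ← sub_eq_add_neg,
      hmaxsub i]
  have hfst : (∑ j, w j • ((pt j, M) : Ed d × ℝ)).1 = y := by
    rw [Prod.fst_sum]
    simp only [Prod.smul_fst]
    have expand : ∀ j, w j • pt j = w j • x + w j • (pt j - x) := fun j => by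
      rw [smul_sub, add_sub_cancel]
    rw [Finset.sum_congr rfl (fun j _ => expand j), Finset.sum_add_distrib, ← Finset.sum_smul,
      hwsum, one_smul, Fintype.sum_option]
    have h0 : w none • (pt none - x) = 0 := by simp [hpt]
    rw [h0, zero_add, Fintype.sum_prod_type]
    have hterm : ∀ i : Fin d, ∑ b : Bool, w (some (i,b)) • (pt (some (i,b)) - x)
        = u i • EuclideanSpace.single i (1:ℝ) := by
      intro i
      rw [Fintype.sum_bool]
      have p1 : pt (some (i,true)) - x = (ε/2) • EuclideanSpace.single i (1:ℝ) := by
        simp [hpt]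
      have p2 : pt (some (i,false)) - x = (-(ε/2)) • EuclideanSpace.single i (1:ℝ) := by
        simp [hpt]
      rw [p1, p2]; exact key i
    rw [Finset.sum_congr rfl (fun i _ => hterm i), aux_sum_coord, hu]
    abel
  have hsnd : (∑ j, w j • ((pt j, M) : Ed d × ℝ)).2 = M := by
    rw [Prod.snd_sum]
    simp only [Prod.smul_snd, smul_eq_mul]
    rw [← Finset.sum_mul, hwsum, one_mul]
  have hmem' : ψ ((∑ j, w j • ((pt j, M) : Ed d × ℝ)).1)
      ≤ (((∑ j, w j • ((pt j, M) : Ed d × ℝ)).2 : ℝ) : EReal) := hmem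
  rw [hfst, hsnd] at hmem'
  exact hmem'

lemma aux_subdiff_nonempty {d : ℕ} (ψ : Ed d → EReal) (hbot : ∀ y, ψ y ≠ ⊥)
    (hconv : Convex ℝ {p : Ed d × ℝ | ψ p.1 ≤ (p.2:EReal)}) {x : Ed d}
    (hx : x ∈ interior {y | ψ y ≠ ⊤}) :
    ∃ v : Ed d, ∀ z, ψ x + ((inner ℝ v (z - x) : ℝ) : EReal) ≤ ψ z := by
  obtain ⟨δ, hδ, M, hbox⟩ := aux_local_bound ψ hbot hconv hx
  set C : Set (Ed d × ℝ) := {p : Ed d × ℝ | ψ p.1 ≤ (p.2:EReal)} with hC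
  have hxtop : ψ x ≠ ⊤ := interior_subset hx
  set r₀ : ℝ := (ψ x).toReal with hr₀
  have hψx : ((r₀ : ℝ) : EReal) = ψ x := EReal.coe_toReal hxtop (hbot x)
  -- the open box inside the epigraph
  have hboxsub : Metric.ball x δ ×ˢ Ioi M ⊆ C := by
    rintro ⟨y, t⟩ ⟨hy, ht⟩
    exact le_trans (hbox y (by simpa [Metric.mem_ball] using hy))
      (EReal.coe_le_coe_iff.2 (le_of_lt ht))
  have hboxint : Metric.ball x δ ×ˢ Ioi M ⊆ interior C :=
    (IsOpen.subset_interior_iff (Metric.isOpen_ball.prod isOpen_Ioi)).2 hboxsub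
  set T : ℝ := max M r₀ + 1 with hT
  have hxT : ((x, T) : Ed d × ℝ) ∈ interior C :=
    hboxint ⟨Metric.mem_ball_self hδ, by simp [hT]; linarith [le_max_left M r₀]⟩
  -- (x, r₀) not in the interior
  have hnotint : ((x, r₀) : Ed d × ℝ) ∉ interior C := by
    intro hmem
    obtain ⟨ε', hε', hb⟩ := Metric.isOpen_iff.1 isOpen_interior _ hmem
    have : ((x, r₀ - ε'/2) : Ed d × ℝ) ∈ C := interior_subset (hb (by
      rw [Metric.mem_ball, Prod.dist_eq]
      simp [dist_self, Real.dist_eq, abs_of_nonneg hε'.le]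
      linarith))
    have h2 : ψ x ≤ ((r₀ - ε'/2 : ℝ) : EReal) := this
    rw [← hψx] at h2
    have := EReal.coe_le_coe_iff.1 h2
    linarith
  obtain ⟨f, hf⟩ := geometric_hahn_banach_open_point (hconv.interior) isOpen_interior hnotint
  have hdecomp : ∀ (y : Ed d) (t : ℝ), f (y, t) = f (y, 0) + t * f (0, 1) := by
    intro y t
    have : ((y, t) : Ed d × ℝ) = (y, (0:ℝ)) + t • ((0 : Ed d), (1:ℝ)) := by
      simp [Prod.ext_iff]
    rw [this, map_add, f.map_smul, smul_eq_mul]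
  set a : ℝ := f (0, 1) with ha
  have haneg : a < 0 := by
    have h1 := hf _ hxT
    rw [hdecomp x T, hdecomp x r₀] at h1
    have hTr : r₀ < T := by simp [hT]; linarith [le_max_right M r₀]
    nlinarith
  have hle : ∀ p ∈ C, f p ≤ f (x, r₀) :=
    fun p hp => aux_le_on hconv hxT f (fun q hq => hf q hq) hp
  set v : Ed d := (-a)⁻¹ • ((InnerProductSpace.toDual ℝ (Ed d)).symm
    (f.comp (ContinuousLinearMap.inl ℝ (Ed d) ℝ))) with hv
  have hinner : ∀ z : Ed d, (inner ℝ v (z - x) : ℝ) = (-a)⁻¹ * (f (z, 0) - f (x, 0)) := by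
    intro z
    rw [hv, real_inner_smul_left]
    congr 1
    rw [InnerProductSpace.toDual_symm_apply]
    have : ((z - x, (0:ℝ)) : Ed d × ℝ) = (z, (0:ℝ)) - (x, (0:ℝ)) := by simp [Prod.ext_iff]
    simp only [ContinuousLinearMap.comp_apply, ContinuousLinearMap.inl_apply]
    rw [this, map_sub]
  refine ⟨v, fun z => ?_⟩
  by_cases hz : ψ z = ⊤
  · simp [hz]
  have hψz : (((ψ z).toReal : ℝ) : EReal) = ψ z := EReal.coe_toReal hz (hbot z)
  set t : ℝ := (ψ z).toReal with htz
  have hzt : ((z, t) : Ed d × ℝ) ∈ C := by simpa [hC] using hψz.ge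
  have h1 : f (z, t) ≤ f (x, r₀) := hle _ hzt
  rw [hdecomp z t, hdecomp x r₀] at h1
  have h2 : r₀ + (inner ℝ v (z - x) : ℝ) ≤ t := by
    rw [hinner z]
    have hb : 0 < -a := by linarith
    have key2 : f (z, 0) - f (x, 0) ≤ (-a) * (t - r₀) := by nlinarith [h1]
    have key3 : (-a)⁻¹ * (f (z, 0) - f (x, 0)) ≤ t - r₀ := by
      rw [inv_mul_le_iff₀ hb]; exact key2
    linarith
  calc ψ x + ((inner ℝ v (z - x) : ℝ) : EReal) = ((r₀ + (inner ℝ v (z - x) : ℝ) : ℝ) : EReal) := by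
        rw [← hψx, ← EReal.coe_add]
    _ ≤ ((t : ℝ) : EReal) := EReal.coe_le_coe_iff.2 h2
    _ = ψ z := hψz

end AuxLemmas

/-- Lemma 5.4: let `ψ` be closed proper convex and `D` meet `dom ψ`;
let `g = ψ` on `D`, `+∞` off `D`, and let `φ` be the function whose epigraph is
`cl(conv(epi g))`. Then `φ` is closed convex and: (a) `φ ≥ ψ`; (b) `φ = ψ` on `D`;
(c) for `x ∈ D`, `∂φ(x) = {v : ∀ z ∈ D, ψ(z) ≥ ψ(x) + ⟨z - x, v⟩} ⊇ ∂ψ(x)`;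
(d) `dom ∇φ ⊆ dom ∂ψ`; (e) on `D`, differentiability of `φ` gives differentiability of
`ψ` with the same gradient. -/
theorem tails_of_ot_clconvhull
    (d : ℕ) (ψ : Ed d → EReal) (hψ : ProperConvex ψ) (hcl : LowerSemicontinuous ψ)
    (D : Set (Ed d)) (hD : (D ∩ {x | ψ x ≠ ⊤}).Nonempty)
    (φ : Ed d → EReal)
    (hφ : {p : Ed d × ℝ | φ p.1 ≤ (p.2 : EReal)}
      = closure (convexHull ℝ {p : Ed d × ℝ | p.1 ∈ D ∧ ψ p.1 ≤ (p.2 : EReal)})) :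
    Convex ℝ {p : Ed d × ℝ | φ p.1 ≤ (p.2 : EReal)} ∧
    LowerSemicontinuous φ ∧
    -- (a)
    (∀ x, ψ x ≤ φ x) ∧
    -- (b)
    (∀ x ∈ D, φ x = ψ x) ∧
    -- (c)
    (∀ x ∈ D,
      subdiff φ x
        = {v : Ed d | ∀ z ∈ D, ψ x + ((inner ℝ v (z - x) : ℝ) : EReal) ≤ ψ z} ∧
      subdiff ψ x ⊆ subdiff φ x) ∧
    -- (d)
    ({x | DiffAt φ x} ⊆ {x | (subdiff ψ x).Nonempty}) ∧
    -- (e)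
    (∀ x ∈ D, DiffAt φ x → DiffAt ψ x ∧ grad φ x = grad ψ x) := by
  obtain ⟨x₀, hx₀D, hx₀ψ⟩ := hD
  obtain ⟨hbot, -, hconvψ⟩ := hψ
  have hCφconv : Convex ℝ {p : Ed d × ℝ | φ p.1 ≤ (p.2 : EReal)} := by
    rw [hφ]; exact (convex_convexHull ℝ _).closure
  have hCφclosed : IsClosed {p : Ed d × ℝ | φ p.1 ≤ (p.2 : EReal)} := by
    rw [hφ]; exact isClosed_closure
  have hsub_gφ : {p : Ed d × ℝ | p.1 ∈ D ∧ ψ p.1 ≤ (p.2 : EReal)}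
      ⊆ {p : Ed d × ℝ | φ p.1 ≤ (p.2 : EReal)} := by
    rw [hφ]; exact (subset_convexHull ℝ _).trans subset_closure
  have hφψ : {p : Ed d × ℝ | φ p.1 ≤ (p.2 : EReal)}
      ⊆ {p : Ed d × ℝ | ψ p.1 ≤ (p.2 : EReal)} := by
    rw [hφ]
    exact closure_minimal (convexHull_min (fun p hp => hp.2) hconvψ) (aux_closed_of_lsc hcl)
  have hA : ∀ x, ψ x ≤ φ x := fun x =>
    aux_ereal_le (fun r hr =>
      (hφψ (show ((x, r) : Ed d × ℝ) ∈ _ from hr) : ψ x ≤ ((r : ℝ) : EReal)))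
  have hB : ∀ x ∈ D, φ x = ψ x := fun x hx =>
    le_antisymm
      (aux_ereal_le (fun r hr =>
        (hsub_gφ (show ((x, r) : Ed d × ℝ) ∈ _ from ⟨hx, hr⟩) : φ x ≤ ((r : ℝ) : EReal))))
      (hA x)
  have hφbot : ∀ x, φ x ≠ ⊥ := fun x h => hbot x (le_bot_iff.1 (h ▸ hA x))
  -- (c)
  have hC : ∀ x ∈ D, subdiff φ x
      = {v : Ed d | ∀ z ∈ D, ψ x + ((inner ℝ v (z - x) : ℝ) : EReal) ≤ ψ z} := by
    intro x hx
    by_cases hxt : ψ x = ⊤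
    · ext v
      simp only [subdiff, Set.mem_setOf_eq]
      constructor
      · intro hv
        exfalso
        have h1 := hv x₀
        rw [hB x hx, hxt, EReal.top_add_coe, hB x₀ hx₀D] at h1
        exact hx₀ψ (top_le_iff.1 h1)
      · intro hv
        exfalso
        have h1 := hv x₀ hx₀D
        rw [hxt, EReal.top_add_coe] at h1
        exact hx₀ψ (top_le_iff.1 h1)
    · have hψx : (((ψ x).toReal : ℝ) : EReal) = ψ x := EReal.coe_toReal hxt (hbot x)
      set c : ℝ := (ψ x).toReal with hcdef
      ext v
      simp only [subdiff, Set.mem_setOf_eq]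
      constructor
      · intro hv z hz
        have h1 := hv z
        rw [hB x hx, hB z hz] at h1
        exact h1
      · intro hv z
        set H : Set (Ed d × ℝ) := {p : Ed d × ℝ | c + (inner ℝ v (p.1 - x) : ℝ) ≤ p.2} with hH
        have hHrw : H = {p : Ed d × ℝ | (inner ℝ v p.1 : ℝ) - p.2 ≤ (inner ℝ v x : ℝ) - c} := by
          ext p
          simp only [hH, Set.mem_setOf_eq, inner_sub_right]
          constructor <;> intro h <;> linarith
        have hHconv : Convex ℝ H := by
          rw [hHrw]
          refine convex_halfSpace_le ⟨fun p q => ?_, fun s p => ?_⟩ _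
          · simp only [Prod.fst_add, Prod.snd_add, inner_add_right]; ring
          · simp only [Prod.smul_fst, Prod.smul_snd, real_inner_smul_right, smul_eq_mul]; ring
        have hHclosed : IsClosed H := by
          rw [hHrw]
          exact isClosed_le ((continuous_const.inner continuous_fst).sub continuous_snd)
            continuous_const
        have hgH : {p : Ed d × ℝ | p.1 ∈ D ∧ ψ p.1 ≤ (p.2 : EReal)} ⊆ H := by
          rintro ⟨y, r⟩ ⟨hyD, hyr⟩
          have h1 := hv y hyD
          rw [← hψx, ← EReal.coe_add] at h1
          exact EReal.coe_le_coe_iff.1 (h1.trans hyr)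
        have hφH : {p : Ed d × ℝ | φ p.1 ≤ (p.2 : EReal)} ⊆ H := by
          rw [hφ]; exact closure_minimal (convexHull_min hgH hHconv) hHclosed
        rw [hB x hx, ← hψx, ← EReal.coe_add]
        exact aux_ereal_le (fun r hr =>
          EReal.coe_le_coe_iff.2 (hφH (show ((z, r) : Ed d × ℝ) ∈ _ from hr)))
  have hC2 : ∀ x ∈ D, subdiff ψ x ⊆ subdiff φ x := by
    intro x hx v hv
    rw [hC x hx]
    exact fun z _ => hv z
  -- (d)
  have hDd : ∀ x, DiffAt φ x → (subdiff ψ x).Nonempty := by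
    intro x hxd
    obtain ⟨v, hv⟩ := hxd
    have hvmem : ∀ z, φ x + ((inner ℝ v (z - x) : ℝ) : EReal) ≤ φ z := by
      have : v ∈ subdiff φ x := by rw [hv]; exact Set.mem_singleton _
      exact this
    rcases subsingleton_or_nontrivial (Ed d) with hss | hnt
    · refine ⟨0, ?_⟩
      intro z
      have hz : z = x := Subsingleton.elim z x
      subst hz
      simp
    · have hφxt : φ x ≠ ⊤ := by
        intro h
        have h1 := hvmem x₀
        rw [h, EReal.top_add_coe, hB x₀ hx₀D] at h1
        exact hx₀ψ (top_le_iff.1 h1)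
      set dom : Set (Ed d) := {y | φ y ≠ ⊤} with hdom
      have hdomconv : Convex ℝ dom := by
        intro y₁ hy₁ y₂ hy₂ s t hs ht hst
        have hr₁ : (((φ y₁).toReal : ℝ) : EReal) = φ y₁ := EReal.coe_toReal hy₁ (hφbot y₁)
        have hr₂ : (((φ y₂).toReal : ℝ) : EReal) = φ y₂ := EReal.coe_toReal hy₂ (hφbot y₂)
        have hmem := hCφconv
          (show ((y₁, (φ y₁).toReal) : Ed d × ℝ) ∈ _ from hr₁.ge)
          (show ((y₂, (φ y₂).toReal) : Ed d × ℝ) ∈ _ from hr₂.ge) hs ht hst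
        have hmem' : φ (s • y₁ + t • y₂)
            ≤ ((s * (φ y₁).toReal + t * (φ y₂).toReal : ℝ) : EReal) := hmem
        exact fun htop => by rw [htop] at hmem'; exact (EReal.coe_ne_top _) (top_le_iff.1 hmem')
      have hxint : x ∈ interior dom := by
        by_contra hxint
        have hW : ∃ w : Ed d, w ≠ 0 ∧ ∀ y ∈ dom, (inner ℝ w (y - x) : ℝ) ≤ 0 := by
          rcases Set.eq_empty_or_nonempty (interior dom) with hie | hie
          · have hspan : ¬ affineSpan ℝ dom = ⊤ := by
              intro h
              rw [← hdomconv.interior_nonempty_iff_affineSpan_eq_top] at h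
              exact h.ne_empty hie
            have hxdom : x ∈ dom := hφxt
            have hVne : (affineSpan ℝ dom).direction ≠ ⊤ := by
              intro h
              exact hspan ((AffineSubspace.direction_eq_top_iff_of_nonempty
                ⟨x, subset_affineSpan ℝ dom hxdom⟩).1 h)
            have hOrth : ((affineSpan ℝ dom).direction)ᗮ ≠ ⊥ := by
              intro h
              exact hVne (Submodule.orthogonal_eq_bot_iff.1 h)
            obtain ⟨w, hwV, hw0⟩ := (Submodule.ne_bot_iff _).1 hOrth
            refine ⟨w, hw0, fun y hy => ?_⟩
            have hmemdir : y - x ∈ (affineSpan ℝ dom).direction := by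
              have := AffineSubspace.vsub_mem_direction
                (subset_affineSpan ℝ dom hy) (subset_affineSpan ℝ dom hxdom)
              simpa using this
            rw [(Submodule.mem_orthogonal' _ _).1 hwV _ hmemdir]
          · obtain ⟨f, hf⟩ :=
              geometric_hahn_banach_open_point hdomconv.interior isOpen_interior hxint
            obtain ⟨p₀, hp₀⟩ := hie
            set w := (InnerProductSpace.toDual ℝ (Ed d)).symm f with hwdef
            have hwapp : ∀ y, (inner ℝ w y : ℝ) = f y := fun y =>
              InnerProductSpace.toDual_symm_apply
            have hw0 : w ≠ 0 := by
              intro h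
              have h1 := hf p₀ hp₀
              rw [← hwapp p₀, ← hwapp x, h] at h1
              simp at h1
            refine ⟨w, hw0, fun y hy => ?_⟩
            have hfy : f y ≤ f x := aux_le_on hdomconv hp₀ f hf hy
            calc (inner ℝ w (y - x) : ℝ) = f (y - x) := hwapp _
              _ = f y - f x := map_sub f y x
              _ ≤ 0 := by linarith
        obtain ⟨w, hw0, hwle⟩ := hW
        have hvw : v + w ∈ subdiff φ x := by
          intro z
          by_cases hz : φ z = ⊤
          · rw [hz]; exact le_top
          · have h1 : (inner ℝ (v + w) (z - x) : ℝ) ≤ (inner ℝ v (z - x) : ℝ) := by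
              rw [inner_add_left]; linarith [hwle z hz]
            calc φ x + ((inner ℝ (v + w) (z - x) : ℝ) : EReal)
                ≤ φ x + ((inner ℝ v (z - x) : ℝ) : EReal) :=
                  add_le_add_right (EReal.coe_le_coe_iff.2 h1) _
              _ ≤ φ z := hvmem z
        rw [hv, Set.mem_singleton_iff] at hvw
        exact hw0 (by simpa using hvw)
      have hdomsub : dom ⊆ {y | ψ y ≠ ⊤} := by
        intro y hy hyt
        exact hy (top_le_iff.1 (hyt ▸ hA y))
      have hxintψ : x ∈ interior {y | ψ y ≠ ⊤} := interior_mono hdomsub hxint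
      obtain ⟨u, hu⟩ := aux_subdiff_nonempty ψ hbot hconvψ hxintψ
      exact ⟨u, hu⟩
  -- (e)
  have hE : ∀ x ∈ D, DiffAt φ x → DiffAt ψ x ∧ grad φ x = grad ψ x := by
    intro x hx hxd
    obtain ⟨v, hv⟩ := hxd
    obtain ⟨u, hu⟩ := hDd x ⟨v, hv⟩
    have huv : u = v := by
      have h1 := hC2 x hx hu
      rw [hv, Set.mem_singleton_iff] at h1
      exact h1
    have hsub : subdiff ψ x = {v} := by
      apply Set.Subset.antisymm
      · intro y hy
        have h1 := hC2 x hx hy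
        rw [hv, Set.mem_singleton_iff] at h1
        exact h1
      · intro y hy
        rw [Set.mem_singleton_iff] at hy
        subst hy
        exact huv ▸ hu
    have hdψ : DiffAt ψ x := ⟨v, hsub⟩
    refine ⟨hdψ, ?_⟩
    have g1 : grad φ x = v := by
      have h' : DiffAt φ x := ⟨v, hv⟩
      unfold grad
      rw [dif_pos h']
      have h2 : ({v} : Set (Ed d)) = {h'.choose} := hv.symm.trans h'.choose_spec
      exact (Set.singleton_eq_singleton_iff.1 h2).symm
    have g2 : grad ψ x = v := by
      unfold grad
      rw [dif_pos hdψ]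
      have h2 : ({v} : Set (Ed d)) = {hdψ.choose} := hsub.symm.trans hdψ.choose_spec
      exact (Set.singleton_eq_singleton_iff.1 h2).symm
    rw [g1, g2]
  exact ⟨hCφconv, aux_lsc_of_closed hCφclosed, hA, hB,
    fun x hx => ⟨hC x hx, hC2 x hx⟩, hDd, hE⟩
end

section
/- Let μₙ, νₙ ∈ M₀(ℝ^d) and πₙ ∈ Π(μₙ, νₙ) for all n ∈ ℕ. If πₙ →₀ π in M₀(ℝ^d × ℝ^d) for some measure π, then the left and right marginals μ and ν of π belong to M₀(ℝ^d), π ∈ Π(μ, ν), and μₙ →₀ μ and νₙ →₀ ν in M₀(ℝ^d). -/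
open MeasureTheory Filter Topology Set
open scoped Pointwise ENNReal

section Helpers

variable {d : ℕ}

private lemma aux_isM0 (πl : Measure (Ed d × Ed d)) (hπl : IsM0 πl)
    (φ : Ed d × Ed d → Ed d) (hφ : Measurable φ) (hn : ∀ p, ‖φ p‖ ≤ ‖p‖) :
    IsM0 ((πl.map φ).restrict {0}ᶜ) := by
  constructor
  · rw [Measure.restrict_apply (measurableSet_singleton 0)]
    simp
  · intro r hr
    have hU : MeasurableSet {x : Ed d | r < ‖x‖} :=
      measurableSet_lt measurable_const continuous_norm.measurable
    calc ((πl.map φ).restrict {0}ᶜ) {x | r < ‖x‖}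
        ≤ (πl.map φ) {x | r < ‖x‖} := Measure.restrict_le_self _
      _ = πl (φ ⁻¹' {x | r < ‖x‖}) := Measure.map_apply hφ hU
      _ ≤ πl {p | r < ‖p‖} := measure_mono (fun p hp => lt_of_lt_of_le hp (hn p))
      _ < ⊤ := hπl.2 r hr

private lemma aux_integral (πl : Measure (Ed d × Ed d))
    (φ : Ed d × Ed d → Ed d) (hφ : Measurable φ)
    (f : Ed d → ℝ) (hc : Continuous f) (r : ℝ) (hr : 0 < r)
    (hvan : ∀ x, ‖x‖ ≤ r → f x = 0) :
    ∫ x, f x ∂((πl.map φ).restrict {0}ᶜ) = ∫ p, f (φ p) ∂πl := by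
  set U := {x : Ed d | r < ‖x‖} with hUdef
  have hU : MeasurableSet U := measurableSet_lt measurable_const continuous_norm.measurable
  have hUsub : U ⊆ ({(0 : Ed d)}ᶜ : Set (Ed d)) := by
    intro x hx
    simp only [Set.mem_compl_iff, Set.mem_singleton_iff]
    rintro rfl
    simp only [hUdef, Set.mem_setOf_eq, norm_zero] at hx
    exact absurd hx (not_lt.2 hr.le)
  have hfind : Set.indicator U f = f := by
    funext x
    by_cases hx : x ∈ U
    · simp [hx]
    · simp [hx, hvan x (le_of_not_gt hx)]
  have hind : ∀ m : Measure (Ed d), ∫ x, f x ∂m = ∫ x in U, f x ∂m := by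
    intro m
    calc ∫ x, f x ∂m = ∫ x, U.indicator f x ∂m := by rw [hfind]
      _ = ∫ x in U, f x ∂m := integral_indicator hU
  rw [hind ((πl.map φ).restrict {0}ᶜ), Measure.restrict_restrict hU,
    Set.inter_eq_self_of_subset_left hUsub, ← hind (πl.map φ),
    integral_map hφ.aemeasurable hc.aestronglyMeasurable]

private lemma aux_testfun (f : Ed d → ℝ) (hf : M0TestFun f)
    (φ : Ed d × Ed d → Ed d) (hφ : Continuous φ) (hn : ∀ p, ‖φ p‖ ≤ ‖p‖) :
    M0TestFun (fun p : Ed d × Ed d => f (φ p)) := by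
  obtain ⟨hc, ⟨C, hC⟩, r, hr, hvan⟩ := hf
  exact ⟨hc.comp hφ, ⟨C, fun p => hC (φ p)⟩, r, hr,
    fun p hp => hvan (φ p) (le_trans (hn p) hp)⟩

end Helpers

/-- **Statement 15** (Lemma A.2, from joint to marginal convergence): if couplings
`πₙ ∈ Π(μₙ, νₙ)` of measures in `M₀(ℝ^d)` converge in `M₀(ℝ^d × ℝ^d)` to `π`, then the
marginals `μ, ν` of `π` (as measures on `ℝ^d \ {0}`) belong to `M₀(ℝ^d)`, `π` couples
them, and `μₙ →₀ μ`, `νₙ →₀ ν`. -/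
theorem tails_of_ot_marginal_convergence
    (d : ℕ) (μ ν : ℕ → Measure (Ed d))
    (hμ : ∀ n, IsM0 (μ n)) (hν : ∀ n, IsM0 (ν n))
    (π : ℕ → Measure (Ed d × Ed d))
    (hπ : ∀ n, IsCoupling (π n) (μ n) (ν n))
    (πl : Measure (Ed d × Ed d)) (hπl : IsM0 πl)
    (hconv : M0Tendsto (atTop : Filter ℕ) π πl) :
    IsM0 ((πl.map Prod.fst).restrict {0}ᶜ) ∧
    IsM0 ((πl.map Prod.snd).restrict {0}ᶜ) ∧
    (∀ A : Set (Ed d), MeasurableSet A → (0 : Ed d) ∉ A →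
      πl (A ×ˢ (Set.univ : Set (Ed d))) = ((πl.map Prod.fst).restrict {0}ᶜ) A) ∧
    (∀ A : Set (Ed d), MeasurableSet A → (0 : Ed d) ∉ A →
      πl ((Set.univ : Set (Ed d)) ×ˢ A) = ((πl.map Prod.snd).restrict {0}ᶜ) A) ∧
    M0Tendsto (atTop : Filter ℕ) μ ((πl.map Prod.fst).restrict {0}ᶜ) ∧
    M0Tendsto (atTop : Filter ℕ) ν ((πl.map Prod.snd).restrict {0}ᶜ) := by
  have hfst : ∀ n, (π n).map Prod.fst = μ n := by
    intro n
    ext s hs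
    rw [Measure.map_apply measurable_fst hs, ← (hπ n).1 s hs, Set.prod_univ]
  have hsnd : ∀ n, (π n).map Prod.snd = ν n := by
    intro n
    ext s hs
    rw [Measure.map_apply measurable_snd hs, ← (hπ n).2 s hs, Set.univ_prod]
  have hconv1 : M0Tendsto (atTop : Filter ℕ) μ ((πl.map Prod.fst).restrict {0}ᶜ) := by
    intro f hf
    obtain ⟨hc, hCb, r, hr, hvan⟩ := hf
    have h := hconv (fun p => f p.1)
      (aux_testfun f ⟨hc, hCb, r, hr, hvan⟩ Prod.fst continuous_fst (fun p => norm_fst_le p))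
    have heq : ∀ n, (∫ p, f p.1 ∂(π n)) = ∫ x, f x ∂(μ n) := by
      intro n
      rw [← hfst n, integral_map measurable_fst.aemeasurable hc.aestronglyMeasurable]
    rw [aux_integral πl Prod.fst measurable_fst f hc r hr hvan]
    exact h.congr heq
  have hconv2 : M0Tendsto (atTop : Filter ℕ) ν ((πl.map Prod.snd).restrict {0}ᶜ) := by
    intro f hf
    obtain ⟨hc, hCb, r, hr, hvan⟩ := hf
    have h := hconv (fun p => f p.2)
      (aux_testfun f ⟨hc, hCb, r, hr, hvan⟩ Prod.snd continuous_snd (fun p => norm_snd_le p))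
    have heq : ∀ n, (∫ p, f p.2 ∂(π n)) = ∫ x, f x ∂(ν n) := by
      intro n
      rw [← hsnd n, integral_map measurable_snd.aemeasurable hc.aestronglyMeasurable]
    rw [aux_integral πl Prod.snd measurable_snd f hc r hr hvan]
    exact h.congr heq
  refine ⟨aux_isM0 πl hπl Prod.fst measurable_fst (fun p => norm_fst_le p),
    aux_isM0 πl hπl Prod.snd measurable_snd (fun p => norm_snd_le p), ?_, ?_, hconv1, hconv2⟩
  · intro A hA h0
    rw [Measure.restrict_apply' (measurableSet_singleton 0).compl,
      Set.inter_eq_self_of_subset_left (by simpa [Set.subset_compl_singleton_iff] using h0),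
      Measure.map_apply measurable_fst hA, Set.prod_univ]
  · intro A hA h0
    rw [Measure.restrict_apply' (measurableSet_singleton 0).compl,
      Set.inter_eq_self_of_subset_left (by simpa [Set.subset_compl_singleton_iff] using h0),
      Measure.map_apply measurable_snd hA, Set.univ_prod]
end
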